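/- arXiv:2602.11260 — 4 statements merged into one kernel-verified Lean document; each statement's English description precedes it below -/
import Mathlib

section
/- Fix n ≥ 1 and distinct nodes z : Fin n → ℂ lying in the open unit disk 𝔻. Then the set {w : Fin n → ℂ | each w i lies in the closed unit disk and the Pick matrix P(w) with entries P_{ij} = (1 − w i * conj (w j)) / (1 − z i * conj (z j)) is positive semidefinite} is a convex subset of Fin n → ℂ. -/
open scoped ComplexOrder

lemma cauchy_kernel_psd (n : ℕ) (z : Fin n → ℂ) (hz : ∀ i, ‖z i‖ < 1) :
    (Matrix.of fun i j : Fin n => (1 - z i * (starRingEnd ℂ) (z j))⁻¹).PosSemidef := by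
  have hnorm : ∀ i j, ‖z i * (starRingEnd ℂ) (z j)‖ < 1 := by
    intro i j
    rw [norm_mul, RCLike.norm_conj]
    have h1 := hz i; have h2 := hz j
    have := norm_nonneg (z i); have := norm_nonneg (z j)
    nlinarith
  have key : ∀ i j, (1 - z i * (starRingEnd ℂ) (z j))⁻¹
      = ∑' k : ℕ, (z i * (starRingEnd ℂ) (z j)) ^ k := fun i j =>
    (tsum_geometric_of_norm_lt_one (hnorm i j)).symm
  refine Matrix.PosSemidef.of_dotProduct_mulVec_nonneg ?_ ?_
  · ext i j
    simp only [Matrix.conjTranspose_apply, Matrix.of_apply, Matrix.star_apply]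
    rw [star_inv₀]
    congr 1
    simp only [star_sub, star_one, star_mul', Complex.star_def, Complex.conj_conj]
    ring
  · intro x
    have hform : dotProduct (star x)
        ((Matrix.of fun i j : Fin n => (1 - z i * (starRingEnd ℂ) (z j))⁻¹).mulVec x)
        = ∑' k : ℕ, ((starRingEnd ℂ) (∑ j, x j * ((starRingEnd ℂ) (z j)) ^ k)
            * (∑ j, x j * ((starRingEnd ℂ) (z j)) ^ k)) := by
      have hs : ∀ i j : Fin n, Summable (fun k : ℕ =>
          (star (x i) * z i ^ k) * (x j * ((starRingEnd ℂ) (z j)) ^ k)) := by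
        intro i j
        exact ((summable_geometric_of_norm_lt_one (hnorm i j)).mul_left
          (star (x i) * x j)).congr fun k => by rw [mul_pow]; ring
      simp only [dotProduct, Matrix.mulVec, dotProduct, Pi.star_apply,
        Matrix.of_apply]
      calc (∑ i, star (x i) * ∑ j, (1 - z i * (starRingEnd ℂ) (z j))⁻¹ * x j)
          = ∑ i, ∑ j, ∑' k : ℕ,
              (star (x i) * z i ^ k) * (x j * ((starRingEnd ℂ) (z j)) ^ k) := by
            refine Finset.sum_congr rfl fun i _ => ?_
            rw [Finset.mul_sum]
            refine Finset.sum_congr rfl fun j _ => ?_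
            rw [key i j, ← tsum_mul_right, ← tsum_mul_left]
            exact tsum_congr fun k => by rw [mul_pow]; ring
        _ = ∑ i, ∑' k : ℕ, ∑ j,
              (star (x i) * z i ^ k) * (x j * ((starRingEnd ℂ) (z j)) ^ k) :=
            Finset.sum_congr rfl fun i _ => (Summable.tsum_finsetSum fun j _ => hs i j).symm
        _ = ∑' k : ℕ, ∑ i, ∑ j,
              (star (x i) * z i ^ k) * (x j * ((starRingEnd ℂ) (z j)) ^ k) :=
            (Summable.tsum_finsetSum fun i _ => summable_sum fun j _ => hs i j).symm
        _ = ∑' k : ℕ, ((starRingEnd ℂ) (∑ j, x j * ((starRingEnd ℂ) (z j)) ^ k)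
            * (∑ j, x j * ((starRingEnd ℂ) (z j)) ^ k)) := by
            refine tsum_congr fun k => ?_
            rw [← Finset.sum_mul_sum]
            congr 1
            rw [map_sum]
            exact Finset.sum_congr rfl fun j _ => by
              simp [Complex.star_def, map_mul, map_pow]
    rw [hform]
    exact tsum_nonneg fun k => star_mul_self_nonneg _

lemma psd_smul_real {n : ℕ} {M : Matrix (Fin n) (Fin n) ℂ} (h : M.PosSemidef) {t : ℝ}
    (ht : 0 ≤ t) : ((t : ℂ) • M).PosSemidef := by
  refine Matrix.PosSemidef.of_dotProduct_mulVec_nonneg ?_ ?_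
  · show ((t : ℂ) • M).conjTranspose = _
    rw [Matrix.conjTranspose_smul, Complex.star_def, Complex.conj_ofReal, h.1.eq]
  · intro x
    rw [Matrix.smul_mulVec, dotProduct_smul, smul_eq_mul]
    exact mul_nonneg (by exact_mod_cast ht) (h.dotProduct_mulVec_nonneg x)

/-- The set of value-tuples `w` in the closed unit disk whose Pick matrix
`Pᵢⱼ = (1 - wᵢ w̄ⱼ) / (1 - zᵢ z̄ⱼ)` is positive semidefinite is convex. -/
theorem pick_matrix_space_convex (n : ℕ) (hn : 1 ≤ n) (z : Fin n → ℂ)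
    (hz : ∀ i, ‖z i‖ < 1) (hinj : Function.Injective z) :
    Convex ℝ {w : Fin n → ℂ |
      (∀ i, ‖w i‖ ≤ 1) ∧
      (Matrix.of fun i j : Fin n =>
        (1 - w i * (starRingEnd ℂ) (w j)) / (1 - z i * (starRingEnd ℂ) (z j))).PosSemidef} := by
  rintro a ⟨ha1, ha2⟩ b ⟨hb1, hb2⟩ t s ht hs hts
  constructor
  · intro i
    simp only [Pi.add_apply, Pi.smul_apply, Complex.real_smul]
    calc ‖↑t * a i + ↑s * b i‖
        ≤ ‖↑t * a i‖ + ‖↑s * b i‖ := norm_add_le _ _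
      _ = t * ‖a i‖ + s * ‖b i‖ := by
          rw [norm_mul, norm_mul, Complex.norm_of_nonneg ht, Complex.norm_of_nonneg hs]
      _ ≤ t * 1 + s * 1 := add_le_add (mul_le_mul_of_nonneg_left (ha1 i) ht)
          (mul_le_mul_of_nonneg_left (hb1 i) hs)
      _ = 1 := by rw [mul_one, mul_one, hts]
  · have hQ := cauchy_kernel_psd n z hz
    have hM : (Matrix.of fun i j : Fin n =>
        (a i - b i) * (starRingEnd ℂ) (a j - b j) /
          (1 - z i * (starRingEnd ℂ) (z j))).PosSemidef := by
      have h := hQ.mul_mul_conjTranspose_same (Matrix.diagonal fun i => a i - b i)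
      have heq : Matrix.diagonal (fun i => a i - b i) *
          (Matrix.of fun i j : Fin n => (1 - z i * (starRingEnd ℂ) (z j))⁻¹) *
          (Matrix.diagonal fun i => a i - b i).conjTranspose
          = Matrix.of fun i j : Fin n =>
            (a i - b i) * (starRingEnd ℂ) (a j - b j) /
              (1 - z i * (starRingEnd ℂ) (z j)) := by
        ext i j
        simp only [Matrix.diagonal_conjTranspose, Matrix.diagonal_mul, Matrix.mul_diagonal,
          Matrix.of_apply, Pi.star_apply, Complex.star_def, div_eq_mul_inv]
        ring
      rwa [heq] at h
    have hdecomp : (Matrix.of fun i j : Fin n =>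
        (1 - (t • a + s • b) i * (starRingEnd ℂ) ((t • a + s • b) j)) /
          (1 - z i * (starRingEnd ℂ) (z j)))
        = (t : ℂ) • (Matrix.of fun i j : Fin n =>
            (1 - a i * (starRingEnd ℂ) (a j)) / (1 - z i * (starRingEnd ℂ) (z j)))
          + (s : ℂ) • (Matrix.of fun i j : Fin n =>
            (1 - b i * (starRingEnd ℂ) (b j)) / (1 - z i * (starRingEnd ℂ) (z j)))
          + ((t * s : ℝ) : ℂ) • (Matrix.of fun i j : Fin n =>
            (a i - b i) * (starRingEnd ℂ) (a j - b j) /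
              (1 - z i * (starRingEnd ℂ) (z j))) := by
      ext i j
      simp only [Matrix.add_apply, Matrix.smul_apply, Matrix.of_apply, Pi.add_apply,
        Pi.smul_apply, Complex.real_smul, smul_eq_mul]
      simp only [← mul_div_assoc]
      rw [← add_div, ← add_div]
      congr 1
      have hsc : (s : ℂ) = 1 - (t : ℂ) := by
        have : s = 1 - t := by linarith
        rw [this]; push_cast; ring
      simp only [map_add, map_mul, map_sub, Complex.conj_ofReal, map_one]
      push_cast
      rw [hsc]
      ring
    rw [hdecomp]
    exact ((psd_smul_real ha2 ht).add (psd_smul_real hb2 hs)).add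
      (psd_smul_real hM (mul_nonneg ht hs))
end

section
/- (Pick's theorem.) Let n ≥ 1, let z : Fin n → ℂ be pairwise distinct points of the open unit disk 𝔻, and let w : Fin n → ℂ with |w i| ≤ 1 for all i. There exists a function f : ℂ → ℂ, complex-differentiable on 𝔻 with |f(ζ)| ≤ 1 for all ζ ∈ 𝔻, satisfying f(z i) = w i for all i, if and only if the Pick matrix with entries P_{ij} = (1 − w i * conj (w j)) / (1 − z i * conj (z j)) is positive semidefinite. -/
open scoped ComplexOrder
open Complex Metric ComplexConjugate Finset

namespace PickAux

/-- non-vanishing of `1 - x * conj y` type denominators -/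
lemma one_sub_ne {x y : ℂ} (hx : ‖x‖ < 1) (hy : ‖y‖ ≤ 1) :
    1 - x * y ≠ 0 := by
  intro h
  have hxy : x * y = 1 := by linear_combination -h
  have : ‖x * y‖ = 1 := by rw [hxy, norm_one]
  rw [norm_mul] at this
  nlinarith [norm_nonneg x, norm_nonneg y]

lemma abs_conj' (x : ℂ) : ‖conj x‖ = ‖x‖ := Complex.norm_conj x

lemma normSq_lt_one {x : ℂ} (h : ‖x‖ < 1) : Complex.normSq x < 1 := by
  rw [← Complex.sq_norm]; nlinarith [norm_nonneg x]

lemma normSq_le_one {x : ℂ} (h : ‖x‖ ≤ 1) : Complex.normSq x ≤ 1 := by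
  rw [← Complex.sq_norm]; nlinarith [norm_nonneg x]

lemma abs_lt_one_of_normSq {x : ℂ} (h : Complex.normSq x < 1) : ‖x‖ < 1 := by
  rw [← Complex.sq_norm] at h; nlinarith [norm_nonneg x]

lemma abs_le_one_of_normSq {x : ℂ} (h : Complex.normSq x ≤ 1) : ‖x‖ ≤ 1 := by
  rw [← Complex.sq_norm] at h; nlinarith [norm_nonneg x]

/-- The Möbius transform of the disk. -/
noncomputable def mob (a ζ : ℂ) : ℂ := (ζ - a) / (1 - conj a * ζ)

lemma mob_self (a : ℂ) : mob a a = 0 := by simp [mob]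

lemma mob_denom_ne {a ζ : ℂ} (ha : ‖a‖ < 1) (hζ : ‖ζ‖ ≤ 1) :
    1 - conj a * ζ ≠ 0 := by
  have := one_sub_ne (x := conj a) (y := ζ) (by rwa [abs_conj']) hζ
  exact this

/-- The fundamental identity for Möbius transforms. -/
lemma mob_identity {a ζ η : ℂ} (ha : ‖a‖ < 1) (hζ : ‖ζ‖ ≤ 1)
    (hη : ‖η‖ ≤ 1) :
    1 - mob a ζ * conj (mob a η)
      = ((1 - a * conj a) * (1 - ζ * conj η)) / ((1 - conj a * ζ) * (1 - a * conj η)) := by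
  have h1 : 1 - conj a * ζ ≠ 0 := mob_denom_ne ha hζ
  have h2 : 1 - a * conj η ≠ 0 :=
    one_sub_ne ha (by rwa [abs_conj'])
  have h3 : conj (1 - conj a * η) = 1 - a * conj η := by
    simp [map_sub, map_mul]
  have h1' : 1 - ζ * conj a ≠ 0 := by rwa [mul_comm]
  simp only [mob, map_div₀, map_sub, map_mul, Complex.conj_conj, map_one]
  field_simp
  ring

lemma one_sub_normSq_mob {a ζ : ℂ} (ha : ‖a‖ < 1) (hζ : ‖ζ‖ ≤ 1) :
    1 - Complex.normSq (mob a ζ)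
      = (1 - Complex.normSq a) * (1 - Complex.normSq ζ) / Complex.normSq (1 - conj a * ζ) := by
  have key := mob_identity ha hζ hζ
  have h1 : 1 - conj a * ζ ≠ 0 := mob_denom_ne ha hζ
  have h2 : (1 - a * conj ζ) = conj (1 - conj a * ζ) := by simp [map_sub, map_mul]
  rw [Complex.mul_conj] at key
  have h4 : ((1 - Complex.normSq (mob a ζ) : ℝ) : ℂ)
      = (((1 - Complex.normSq a) * (1 - Complex.normSq ζ) / Complex.normSq (1 - conj a * ζ) : ℝ) : ℂ) := by
    push_cast
    rw [key, h2, Complex.mul_conj, Complex.mul_conj, Complex.mul_conj]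
  exact_mod_cast h4

lemma mob_abs_le {a ζ : ℂ} (ha : ‖a‖ < 1) (hζ : ‖ζ‖ ≤ 1) :
    ‖mob a ζ‖ ≤ 1 := by
  apply abs_le_one_of_normSq
  have h := one_sub_normSq_mob ha hζ
  have h1 : 1 - conj a * ζ ≠ 0 := mob_denom_ne ha hζ
  have h2 : 0 < Complex.normSq (1 - conj a * ζ) := Complex.normSq_pos.mpr h1
  have h3 : Complex.normSq a < 1 := normSq_lt_one ha
  have h4 : Complex.normSq ζ ≤ 1 := normSq_le_one hζ
  nlinarith [div_nonneg (mul_nonneg (by linarith : (0:ℝ) ≤ 1 - Complex.normSq a)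
    (by linarith : (0:ℝ) ≤ 1 - Complex.normSq ζ)) h2.le]

lemma mob_abs_lt {a ζ : ℂ} (ha : ‖a‖ < 1) (hζ : ‖ζ‖ < 1) :
    ‖mob a ζ‖ < 1 := by
  apply abs_lt_one_of_normSq
  have h := one_sub_normSq_mob ha hζ.le
  have h1 : 1 - conj a * ζ ≠ 0 := mob_denom_ne ha hζ.le
  have h2 : 0 < Complex.normSq (1 - conj a * ζ) := Complex.normSq_pos.mpr h1
  have h3 : Complex.normSq a < 1 := normSq_lt_one ha
  have h4 : Complex.normSq ζ < 1 := normSq_lt_one hζ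
  nlinarith [div_pos (mul_pos (by linarith : (0:ℝ) < 1 - Complex.normSq a)
    (by linarith : (0:ℝ) < 1 - Complex.normSq ζ)) h2]

/-- `mob (-a)` is inverse to `mob a` on the closed disk. -/
lemma mob_mob {a ζ : ℂ} (ha : ‖a‖ < 1) (hζ : ‖ζ‖ ≤ 1) :
    mob (-a) (mob a ζ) = ζ := by
  have h1 : 1 - conj a * ζ ≠ 0 := mob_denom_ne ha hζ
  have ha2 : 1 - a * conj a ≠ 0 := one_sub_ne ha (by rw [abs_conj']; exact ha.le)
  have hden : 1 - conj (-a) * mob a ζ = (1 - a * conj a) / (1 - conj a * ζ) := by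
    rw [mob, map_neg]
    field_simp
    ring
  have hnum : mob a ζ - (-a) = ζ * (1 - a * conj a) / (1 - conj a * ζ) := by
    have h1' : 1 - ζ * conj a ≠ 0 := by rwa [mul_comm]
    rw [mob]
    field_simp
    ring
  rw [show mob (-a) (mob a ζ) = (mob a ζ - -a) / (1 - conj (-a) * mob a ζ) from rfl,
    hden, hnum, div_eq_iff (div_ne_zero ha2 h1), mul_div_assoc]

lemma mob_differentiableOn {a : ℂ} (ha : ‖a‖ < 1) :
    DifferentiableOn ℂ (mob a) (Metric.closedBall (0:ℂ) 1) := by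
  intro ζ hζ
  rw [Metric.mem_closedBall, dist_zero_right] at hζ
  apply DifferentiableAt.differentiableWithinAt
  apply DifferentiableAt.div
  · exact (differentiableAt_id.sub_const a)
  · exact (differentiableAt_const 1).sub ((differentiableAt_const _).mul differentiableAt_id)
  · exact mob_denom_ne ha hζ

lemma mob_mapsTo {a : ℂ} (ha : ‖a‖ < 1) :
    Set.MapsTo (mob a) (Metric.ball (0:ℂ) 1) (Metric.ball (0:ℂ) 1) := by
  intro ζ hζ
  rw [Metric.mem_ball, dist_zero_right] at *
  exact mob_abs_lt ha hζ

/-! ### Quadratic forms -/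

noncomputable def qf {m : ℕ} (M : Fin m → Fin m → ℂ) (x : Fin m → ℂ) : ℂ :=
  ∑ i, ∑ j, conj (x i) * M i j * x j

lemma dot_eq_qf {m : ℕ} (M : Fin m → Fin m → ℂ) (x : Fin m → ℂ) :
    dotProduct (star x) (Matrix.mulVec (Matrix.of M) x) = qf M x := by
  simp only [dotProduct, Matrix.mulVec, Pi.star_apply, Complex.star_def, qf,
    Matrix.of_apply, Finset.mul_sum]
  exact Finset.sum_congr rfl fun i _ => Finset.sum_congr rfl fun j _ => by ring

lemma posSemidef_iff {m : ℕ} (M : Fin m → Fin m → ℂ) :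
    (Matrix.of M).PosSemidef ↔ (Matrix.of M).IsHermitian ∧ ∀ x, 0 ≤ qf M x := by
  rw [Matrix.posSemidef_iff_dotProduct_mulVec]
  constructor
  · rintro ⟨h1, h2⟩
    exact ⟨h1, fun x => dot_eq_qf M x ▸ h2 x⟩
  · rintro ⟨h1, h2⟩
    exact ⟨h1, fun x => (dot_eq_qf M x).symm ▸ h2 x⟩

lemma pick_herm {m : ℕ} (z w : Fin m → ℂ) :
    (Matrix.of fun i j => (1 - w i * conj (w j)) / (1 - z i * conj (z j))).IsHermitian := by
  rw [Matrix.IsHermitian]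
  ext i j
  simp only [Matrix.conjTranspose_apply, Matrix.of_apply, map_div₀, map_sub, map_mul,
    Complex.conj_conj, map_one, Complex.star_def]
  ring_nf

lemma qf_scale {m : ℕ} (M N : Fin m → Fin m → ℂ) (c : ℂ) (lam : Fin m → ℂ)
    (h : ∀ i j, M i j = c * lam i * conj (lam j) * N i j) (x : Fin m → ℂ) :
    qf M x = c * qf N (fun i => conj (lam i) * x i) := by
  unfold qf
  rw [Finset.mul_sum]
  refine Finset.sum_congr rfl fun i _ => ?_
  rw [Finset.mul_sum]
  refine Finset.sum_congr rfl fun j _ => ?_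
  rw [h i j, map_mul, Complex.conj_conj]
  ring

lemma real_mul_nonneg {c : ℝ} (hc : 0 ≤ c) {q : ℂ} (hq : 0 ≤ q) : 0 ≤ (c : ℂ) * q :=
  mul_nonneg (Complex.zero_le_real.2 hc) hq

lemma nonneg_of_real_mul {c : ℝ} (hc : 0 < c) {q : ℂ} (h : 0 ≤ (c : ℂ) * q) : 0 ≤ q := by
  rw [Complex.nonneg_iff] at h ⊢
  rw [Complex.re_ofReal_mul, Complex.im_ofReal_mul] at h
  constructor
  · nlinarith [h.1]
  · nlinarith [h.2]

/-! ### Möbius congruence of Pick matrices -/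

lemma pick_mobius_entry {a b zi zj wi wj : ℂ} (ha : ‖a‖ < 1)
    (hb : ‖b‖ < 1) (hzi : ‖zi‖ < 1) (hzj : ‖zj‖ < 1)
    (hwi : ‖wi‖ < 1) (hwj : ‖wj‖ < 1) :
    (1 - wi * conj wj) / (1 - zi * conj zj)
      = (((1 - Complex.normSq a) / (1 - Complex.normSq b) : ℝ) : ℂ)
        * ((1 - conj b * wi) / (1 - conj a * zi))
        * conj ((1 - conj b * wj) / (1 - conj a * zj))
        * ((1 - mob b wi * conj (mob b wj)) / (1 - mob a zi * conj (mob a zj))) := by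
  have d1 : 1 - conj a * zi ≠ 0 := mob_denom_ne ha hzi.le
  have d2 : 1 - a * conj zj ≠ 0 := one_sub_ne ha (by rw [abs_conj']; exact hzj.le)
  have e1 : 1 - conj b * wi ≠ 0 := mob_denom_ne hb hwi.le
  have e2 : 1 - b * conj wj ≠ 0 := one_sub_ne hb (by rw [abs_conj']; exact hwj.le)
  have dz : 1 - zi * conj zj ≠ 0 := one_sub_ne hzi (by rw [abs_conj']; exact hzj.le)
  have hA : 1 - a * conj a ≠ 0 := one_sub_ne ha (by rw [abs_conj']; exact ha.le)
  have hB : 1 - b * conj b ≠ 0 := one_sub_ne hb (by rw [abs_conj']; exact hb.le)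
  have hcast : (((1 - Complex.normSq a) / (1 - Complex.normSq b) : ℝ) : ℂ)
      = (1 - a * conj a) / (1 - b * conj b) := by
    push_cast
    rw [Complex.mul_conj, Complex.mul_conj]
  have d1' : 1 - zi * conj a ≠ 0 := by rwa [mul_comm]
  have e1' : 1 - wi * conj b ≠ 0 := by rwa [mul_comm]
  have d2' : 1 - conj zj * a ≠ 0 := by rwa [mul_comm]
  have e2' : 1 - conj wj * b ≠ 0 := by rwa [mul_comm]
  have dz' : 1 - conj zj * zi ≠ 0 := by rwa [mul_comm]
  rw [hcast, mob_identity ha hzi.le hzj.le, mob_identity hb hwi.le hwj.le]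
  simp only [map_div₀, map_sub, map_mul, Complex.conj_conj, map_one]
  field_simp

lemma psd_mobius {m : ℕ} (z w : Fin m → ℂ) (hz : ∀ i, ‖z i‖ < 1)
    (hw : ∀ i, ‖w i‖ < 1) {a b : ℂ} (ha : ‖a‖ < 1)
    (hb : ‖b‖ < 1)
    (h : (Matrix.of fun i j =>
      (1 - mob b (w i) * conj (mob b (w j))) / (1 - mob a (z i) * conj (mob a (z j)))).PosSemidef) :
    (Matrix.of fun i j => (1 - w i * conj (w j)) / (1 - z i * conj (z j))).PosSemidef := by
  rw [posSemidef_iff] at h ⊢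
  refine ⟨pick_herm z w, fun x => ?_⟩
  rw [qf_scale _ (fun i j => (1 - mob b (w i) * conj (mob b (w j)))
        / (1 - mob a (z i) * conj (mob a (z j))))
      (((1 - Complex.normSq a) / (1 - Complex.normSq b) : ℝ) : ℂ)
      (fun i => (1 - conj b * w i) / (1 - conj a * z i))
      (fun i j => pick_mobius_entry ha hb (hz i) (hz j) (hw i) (hw j)) x]
  apply real_mul_nonneg
  · have h1 := normSq_lt_one ha
    have h2 := normSq_lt_one hb
    exact le_of_lt (div_pos (by linarith) (by linarith))
  · exact h.2 _

/-! ### The Schur reduction identity for quadratic forms -/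

lemma qf_reduction {n : ℕ} (zh wh : Fin (n+1) → ℂ)
    (M : Fin (n+1) → Fin (n+1) → ℂ) (N : Fin n → Fin n → ℂ)
    (hM : ∀ i j, M i j = (1 - wh i * conj (wh j)) / (1 - zh i * conj (zh j)))
    (hN : ∀ i j, N i j = (1 - (wh i.castSucc / zh i.castSucc) * conj (wh j.castSucc / zh j.castSucc))
            / (1 - zh i.castSucc * conj (zh j.castSucc)))
    (hzL : zh (Fin.last n) = 0) (hwL : wh (Fin.last n) = 0)
    (hz0 : ∀ i : Fin n, zh i.castSucc ≠ 0)
    (hzd : ∀ i j : Fin n, 1 - zh i.castSucc * conj (zh j.castSucc) ≠ 0)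
    (x : Fin (n+1) → ℂ) :
    qf M x = conj (∑ i, x i) * (∑ i, x i)
        + qf N (fun i => conj (zh i.castSucc) * x i.castSucc) := by
  have hconjz : ∀ j : Fin n, conj (zh j.castSucc) ≠ 0 :=
    fun j => (map_ne_zero (starRingEnd ℂ)).mpr (hz0 j)
  have key : ∀ i j : Fin n,
      conj (x i.castSucc) * M i.castSucc j.castSucc * x j.castSucc
        = conj (x i.castSucc) * x j.castSucc
          + conj (conj (zh i.castSucc) * x i.castSucc) * N i j
            * (conj (zh j.castSucc) * x j.castSucc) := by
    intro i j
    have d := hzd i j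
    have hi := hz0 i
    have hj := hconjz j
    rw [hM, hN]
    simp only [map_mul, map_div₀, Complex.conj_conj]
    field_simp
    ring
  have hML : ∀ i : Fin (n+1), M i (Fin.last n) = 1 := by
    intro i; rw [hM]; simp [hzL, hwL]
  have hLM : ∀ j : Fin (n+1), M (Fin.last n) j = 1 := by
    intro j; rw [hM]; simp [hzL, hwL]
  simp only [qf, Fin.sum_univ_castSucc, hML, hLM, map_sum, map_add, mul_one, one_mul]
  simp only [key]
  simp only [Finset.sum_add_distrib, add_mul, mul_add, Finset.sum_mul, Finset.mul_sum]
  rw [Finset.sum_comm]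
  ring

/-! ### Function-side lemmas -/

lemma interp_mob {a b : ℂ} (ha : ‖a‖ < 1) (hb : ‖b‖ < 1) (f : ℂ → ℂ)
    (hfd : DifferentiableOn ℂ f (Metric.ball 0 1))
    (hfb : ∀ ζ ∈ Metric.ball (0:ℂ) 1, ‖f ζ‖ ≤ 1) :
    ∃ F : ℂ → ℂ, DifferentiableOn ℂ F (Metric.ball 0 1) ∧
      (∀ ζ ∈ Metric.ball (0:ℂ) 1, ‖F ζ‖ ≤ 1) ∧
      ∀ ζ ∈ Metric.ball (0:ℂ) 1, F (mob a ζ) = mob b (f ζ) := by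
  have hna : ‖-a‖ < 1 := by rwa [norm_neg]
  refine ⟨fun ζ => mob b (f (mob (-a) ζ)), ?_, ?_, ?_⟩
  · have h1 : DifferentiableOn ℂ (mob (-a)) (Metric.ball (0:ℂ) 1) :=
      (mob_differentiableOn hna).mono Metric.ball_subset_closedBall
    have h2 : DifferentiableOn ℂ (f ∘ mob (-a)) (Metric.ball (0:ℂ) 1) :=
      hfd.comp h1 (mob_mapsTo hna)
    have h3 : Set.MapsTo (f ∘ mob (-a)) (Metric.ball (0:ℂ) 1) (Metric.closedBall (0:ℂ) 1) := by
      intro ζ hζ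
      rw [Metric.mem_closedBall, dist_zero_right]
      exact hfb _ (mob_mapsTo hna hζ)
    exact (mob_differentiableOn hb).comp h2 h3
  · intro ζ hζ
    exact mob_abs_le hb (hfb _ (mob_mapsTo hna hζ))
  · intro ζ hζ
    rw [Metric.mem_ball, dist_zero_right] at hζ
    show mob b (f (mob (-a) (mob a ζ))) = mob b (f ζ)
    rw [mob_mob ha hζ.le]

lemma schur_step (f : ℂ → ℂ) (hfd : DifferentiableOn ℂ f (Metric.ball 0 1))
    (hfb : ∀ ζ ∈ Metric.ball (0:ℂ) 1, ‖f ζ‖ ≤ 1) (hf0 : f 0 = 0) :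
    ∃ g : ℂ → ℂ, DifferentiableOn ℂ g (Metric.ball 0 1) ∧
      (∀ ζ ∈ Metric.ball (0:ℂ) 1, ‖g ζ‖ ≤ 1) ∧
      ∀ ζ ∈ Metric.ball (0:ℂ) 1, ζ ≠ 0 → g ζ = f ζ / ζ := by
  have h0mem : (0:ℂ) ∈ Metric.ball (0:ℂ) 1 := Metric.mem_ball_self one_pos
  have hmaps : Set.MapsTo f (Metric.ball (0:ℂ) 1) (Metric.ball (0:ℂ) 1) := by
    intro ζ hζ
    rw [Metric.mem_ball, dist_zero_right]
    rcases lt_or_eq_of_le (hfb ζ hζ) with h | h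
    · exact h
    · exfalso
      have hmax : IsMaxOn (norm ∘ f) (Metric.ball (0:ℂ) 1) ζ := by
        intro u hu
        simp only [Function.comp_apply, Set.mem_setOf_eq]
        rw [h]
        exact hfb u hu
      have heq := Complex.eqOn_of_isPreconnected_of_isMaxOn_norm
        (convex_ball (0:ℂ) 1).isPreconnected Metric.isOpen_ball hfd hζ hmax
      have h2 := heq h0mem
      rw [hf0] at h2
      simp only [Function.const_apply] at h2
      rw [← h2] at h
      simp at h
  refine ⟨dslope f 0, ?_, ?_, ?_⟩
  · exact (Complex.differentiableOn_dslope (Metric.isOpen_ball.mem_nhds h0mem)).mpr hfd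
  · intro ζ hζ
    have := Complex.norm_dslope_le_div_of_mapsTo_ball hfd (by rw [hf0]; exact hmaps.mono_right Metric.ball_subset_closedBall) hζ
    rwa [div_one] at this
  · intro ζ _ hζ0
    rw [dslope_of_ne f hζ0, slope_def_field, hf0, sub_zero, sub_zero]

/-- positive semidefinite matrices have vanishing rows where the diagonal vanishes -/
lemma psd_row_zero {m : ℕ} {M : Matrix (Fin m) (Fin m) ℂ} (hM : M.PosSemidef) (k j : Fin m)
    (hkk : M k k = 0) : M k j = 0 := by
  obtain ⟨B, rfl⟩ : ∃ B : Matrix (Fin m) (Fin m) ℂ, M = B.conjTranspose * B := by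
    open scoped MatrixOrder Matrix.Norms.L2Operator in
    obtain ⟨B, hB⟩ := CStarAlgebra.nonneg_iff_eq_star_mul_self.mp hM.nonneg
    exact ⟨B, hB⟩
  have hentry : ∀ i j : Fin m, (B.conjTranspose * B) i j = ∑ l, conj (B l i) * B l j := by
    intro i j
    simp [Matrix.mul_apply, Matrix.conjTranspose_apply, Complex.star_def]
  rw [hentry] at hkk ⊢
  have hz : ∀ l : Fin m, B l k = 0 := by
    have h1 : ∑ l, Complex.normSq (B l k) = 0 := by
      have : (∑ l, (Complex.normSq (B l k) : ℂ)) = 0 := by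
        rw [← hkk]
        exact Finset.sum_congr rfl fun l _ => Complex.normSq_eq_conj_mul_self
      exact_mod_cast this
    intro l
    have := (Finset.sum_eq_zero_iff_of_nonneg
      (fun i _ => Complex.normSq_nonneg (B i k))).mp h1 l (Finset.mem_univ l)
    exact Complex.normSq_eq_zero.mp this
  exact Finset.sum_eq_zero fun l _ => by rw [hz l, map_zero, zero_mul]

lemma abs_le_one_of_diag {zi wi : ℂ} (hzi : ‖zi‖ < 1)
    (h : 0 ≤ (1 - wi * conj wi) / (1 - zi * conj zi)) : ‖wi‖ ≤ 1 := by
  have hcast : (1 - wi * conj wi) / (1 - zi * conj zi)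
      = (((1 - Complex.normSq wi) / (1 - Complex.normSq zi) : ℝ) : ℂ) := by
    push_cast
    rw [Complex.mul_conj, Complex.mul_conj]
  rw [hcast, Complex.zero_le_real] at h
  have hz1 : Complex.normSq zi < 1 := normSq_lt_one hzi
  apply abs_le_one_of_normSq
  rcases div_nonneg_iff.mp h with ⟨h1, _⟩ | ⟨_, h2⟩
  · linarith
  · linarith

lemma mem_ball_iff_abs {ζ : ℂ} : ζ ∈ Metric.ball (0:ℂ) 1 ↔ ‖ζ‖ < 1 := by
  rw [Metric.mem_ball, dist_zero_right]

lemma qf_single {m : ℕ} (M : Fin m → Fin m → ℂ) (k : Fin m) :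
    qf M (Pi.single k 1) = M k k := by
  unfold qf
  rw [Finset.sum_eq_single k]
  · rw [Finset.sum_eq_single k]
    · simp
    · intro j _ hj
      simp [Pi.single_apply, hj]
    · intro h; exact absurd (Finset.mem_univ k) h
  · intro i _ hi
    simp [Pi.single_apply, hi]
  · intro h; exact absurd (Finset.mem_univ k) h

lemma pick_aux (n : ℕ) : ∀ (z : Fin n → ℂ), (∀ i, ‖z i‖ < 1) →
    Function.Injective z → ∀ (w : Fin n → ℂ), (∀ i, ‖w i‖ ≤ 1) →
    ((∃ f : ℂ → ℂ, DifferentiableOn ℂ f (Metric.ball (0 : ℂ) 1) ∧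
        (∀ ζ ∈ Metric.ball (0 : ℂ) 1, ‖f ζ‖ ≤ 1) ∧
        (∀ i, f (z i) = w i)) ↔
      (Matrix.of fun i j : Fin n =>
        (1 - w i * conj (w j)) / (1 - z i * conj (z j))).PosSemidef) := by
  induction n with
  | zero =>
    intro z hz hinj w hw
    constructor
    · intro _
      rw [posSemidef_iff]
      exact ⟨pick_herm z w, fun x => by simp [qf]⟩
    · intro _
      exact ⟨fun _ => 0, differentiableOn_const 0, fun ζ _ => by simp, fun i => i.elim0⟩
  | succ n IH =>
    intro z hz hinj w hw
    by_cases hb1 : ∃ k, ‖w k‖ = 1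
    · -- boundary case: some value has modulus one
      obtain ⟨k, hk⟩ := hb1
      have hwk : w k * conj (w k) = 1 := by
        rw [Complex.mul_conj]
        norm_cast
        rw [← Complex.sq_norm, hk]; norm_num
      constructor
      · rintro ⟨f, hfd, hfb, hfi⟩
        have hmax : IsMaxOn (norm ∘ f) (Metric.ball (0:ℂ) 1) (z k) := by
          intro u hu
          simp only [Function.comp_apply, Set.mem_setOf_eq, hfi k, hk]
          exact hfb u hu
        have heq := Complex.eqOn_of_isPreconnected_of_isMaxOn_norm
          (convex_ball (0:ℂ) 1).isPreconnected Metric.isOpen_ball hfd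
          (mem_ball_iff_abs.mpr (hz k)) hmax
        have hall : ∀ j, w j = w k := by
          intro j
          have h1 := heq (mem_ball_iff_abs.mpr (hz j))
          simp only [Function.const_apply] at h1
          rw [← hfi j, h1, hfi k]
        have hzero : (Matrix.of fun i j : Fin (n+1) =>
            (1 - w i * conj (w j)) / (1 - z i * conj (z j))) = 0 := by
          ext i j
          simp only [Matrix.of_apply, hall i, hall j, hwk, sub_self, zero_div, Matrix.zero_apply]
        rw [hzero]
        exact Matrix.PosSemidef.zero
      · intro hP
        have hdiag : (Matrix.of fun i j : Fin (n+1) =>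
            (1 - w i * conj (w j)) / (1 - z i * conj (z j))) k k = 0 := by
          simp only [Matrix.of_apply, hwk, sub_self, zero_div]
        have hall : ∀ j, w j = w k := by
          intro j
          have h0 := psd_row_zero hP k j hdiag
          simp only [Matrix.of_apply] at h0
          have hden : 1 - z k * conj (z j) ≠ 0 :=
            one_sub_ne (hz k) (by rw [abs_conj']; exact (hz j).le)
          have hnum : 1 - w k * conj (w j) = 0 := by
            rcases div_eq_zero_iff.mp h0 with h | h
            · exact h
            · exact absurd h hden
          have hwk0 : w k ≠ 0 := by
            intro h; rw [h] at hk; simp at hk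
          have hcc : conj (w j) = conj (w k) :=
            mul_left_cancel₀ hwk0 (by linear_combination -hwk - hnum)
          exact (starRingEnd ℂ).injective hcc
        refine ⟨fun _ => w k, differentiableOn_const _, fun ζ _ => hw k, fun i => (hall i).symm⟩
    · -- main case: all values strictly inside the disk
      push_neg at hb1
      have hws : ∀ k, ‖w k‖ < 1 := fun k => lt_of_le_of_ne (hw k) (hb1 k)
      set a := z (Fin.last n) with hadef
      set b := w (Fin.last n) with hbdef
      have ha : ‖a‖ < 1 := hz _
      have hb : ‖b‖ < 1 := hws _
      have hna : ‖-a‖ < 1 := by rwa [norm_neg]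
      have hnb : ‖-b‖ < 1 := by rwa [norm_neg]
      set zh : Fin (n+1) → ℂ := fun i => mob a (z i) with hzhdef
      set wh : Fin (n+1) → ℂ := fun i => mob b (w i) with hwhdef
      have hzh : ∀ i, ‖zh i‖ < 1 := fun i => mob_abs_lt ha (hz i)
      have hwh : ∀ i, ‖wh i‖ < 1 := fun i => mob_abs_lt hb (hws i)
      have hzhL : zh (Fin.last n) = 0 := by rw [hzhdef]; simp only [← hadef, mob_self]
      have hwhL : wh (Fin.last n) = 0 := by rw [hwhdef]; simp only [← hbdef, mob_self]
      have hzmm : ∀ i, mob (-a) (zh i) = z i := fun i => mob_mob ha (hz i).le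
      have hwmm : ∀ i, mob (-b) (wh i) = w i := fun i => mob_mob hb (hws i).le
      have hzhinj : Function.Injective zh := by
        intro i j h
        apply hinj
        rw [← hzmm i, ← hzmm j, h]
      have hz0 : ∀ i : Fin n, zh i.castSucc ≠ 0 := by
        intro i h
        have : i.castSucc = Fin.last n := hzhinj (by rw [h, hzhL])
        exact absurd this (Fin.castSucc_lt_last i).ne
      have hzd' : ∀ i j : Fin (n+1), 1 - zh i * conj (zh j) ≠ 0 :=
        fun i j => one_sub_ne (hzh i) (by rw [abs_conj']; exact (hzh j).le)
      set z' : Fin n → ℂ := fun i => zh i.castSucc with hz'def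
      set w' : Fin n → ℂ := fun i => wh i.castSucc / zh i.castSucc with hw'def
      have hz' : ∀ i, ‖z' i‖ < 1 := fun i => hzh _
      have hinj' : Function.Injective z' := by
        intro i j h
        exact Fin.castSucc_injective n (hzhinj h)
      -- the three matrices
      set P : Matrix (Fin (n+1)) (Fin (n+1)) ℂ := Matrix.of fun i j =>
        (1 - w i * conj (w j)) / (1 - z i * conj (z j)) with hPdef
      set Ph : Matrix (Fin (n+1)) (Fin (n+1)) ℂ := Matrix.of fun i j =>
        (1 - wh i * conj (wh j)) / (1 - zh i * conj (zh j)) with hPhdef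
      set P' : Matrix (Fin n) (Fin n) ℂ := Matrix.of fun i j =>
        (1 - w' i * conj (w' j)) / (1 - z' i * conj (z' j)) with hP'def
      have heqP : (Matrix.of fun i j =>
          (1 - mob (-b) (wh i) * conj (mob (-b) (wh j)))
            / (1 - mob (-a) (zh i) * conj (mob (-a) (zh j)))) = P := by
        ext i j
        simp only [Matrix.of_apply, hzmm, hwmm, hPdef]
      constructor
      · rintro ⟨f, hfd, hfb, hfi⟩
        obtain ⟨F, hFd, hFb, hFv⟩ := interp_mob ha hb f hfd hfb
        have hFz : ∀ i, F (zh i) = wh i := by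
          intro i
          have := hFv (z i) (mem_ball_iff_abs.mpr (hz i))
          rw [hfi i] at this
          exact this
        have hF0 : F 0 = 0 := by
          have := hFz (Fin.last n)
          rwa [hzhL, hwhL] at this
        obtain ⟨g, hgd, hgb, hgv⟩ := schur_step F hFd hFb hF0
        have hgz : ∀ i : Fin n, g (z' i) = w' i := by
          intro i
          rw [hgv (z' i) (mem_ball_iff_abs.mpr (hz' i)) (hz0 i), hw'def]
          simp only [hz'def]
          rw [hFz i.castSucc]
        have hw' : ∀ i, ‖w' i‖ ≤ 1 := by
          intro i
          rw [← hgz i]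
          exact hgb _ (mem_ball_iff_abs.mpr (hz' i))
        have hP'psd : P'.PosSemidef := (IH z' hz' hinj' w' hw').mp ⟨g, hgd, hgb, hgz⟩
        have hPh : Ph.PosSemidef := by
          rw [hPhdef, posSemidef_iff]
          refine ⟨pick_herm zh wh, fun x => ?_⟩
          rw [qf_reduction zh wh _ (fun i j => P' i j) (fun i j => rfl)
            (fun i j => by simp only [hP'def, Matrix.of_apply, hz'def, hw'def])
            hzhL hwhL hz0 (fun i j => hzd' _ _) x]
          apply add_nonneg
          · simpa using star_mul_self_nonneg (∑ i, x i)
          · rw [hP'def, posSemidef_iff] at hP'psd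
            exact hP'psd.2 _
        exact psd_mobius z w hz hws ha hb hPh
      · intro hP
        have hPh : Ph.PosSemidef := by
          rw [hPhdef]
          exact psd_mobius zh wh hzh hwh hna hnb (heqP ▸ hP)
        have hqf' : ∀ y : Fin n → ℂ, 0 ≤ qf (fun i j => P' i j) y := by
          intro y
          set x : Fin (n+1) → ℂ := Fin.lastCases (-∑ i : Fin n, y i / conj (zh i.castSucc))
            (fun i => y i / conj (zh i.castSucc)) with hxdef
          have hxc : ∀ i : Fin n, x i.castSucc = y i / conj (zh i.castSucc) := by
            intro i; rw [hxdef]; simp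
          have hxL : x (Fin.last n) = -∑ i : Fin n, y i / conj (zh i.castSucc) := by
            rw [hxdef]; simp
          have hsum : ∑ i, x i = 0 := by
            rw [Fin.sum_univ_castSucc]
            simp only [hxc, hxL]
            ring
          have hred := qf_reduction zh wh (fun i j => Ph i j) (fun i j => P' i j)
            (fun i j => by simp only [hPhdef, Matrix.of_apply])
            (fun i j => by simp only [hP'def, Matrix.of_apply, hz'def, hw'def])
            hzhL hwhL hz0 (fun i j => hzd' _ _) x
          rw [hsum] at hred
          have hy : (fun i : Fin n => conj (zh i.castSucc) * x i.castSucc) = y := by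
            funext i
            rw [hxc i, mul_div_cancel₀]
            exact (map_ne_zero (starRingEnd ℂ)).mpr (hz0 i)
          rw [hy] at hred
          simp only [map_zero, zero_mul, mul_zero, zero_add] at hred
          rw [← hred]
          rw [hPhdef, posSemidef_iff] at hPh
          exact hPh.2 _
        have hP'psd : P'.PosSemidef := by
          rw [hP'def, posSemidef_iff]
          exact ⟨pick_herm z' w', hqf'⟩
        have hw'le : ∀ i, ‖w' i‖ ≤ 1 := by
          intro i
          apply abs_le_one_of_diag (hz' i)
          have := hqf' (Pi.single i 1)
          rwa [qf_single (fun i j => P' i j) i, hP'def] at this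
        obtain ⟨g, hgd, hgb, hgz⟩ := (IH z' hz' hinj' w' hw'le).mpr hP'psd
        have hFd : DifferentiableOn ℂ (fun ζ => ζ * g ζ) (Metric.ball 0 1) :=
          differentiableOn_id.mul hgd
        have hFb : ∀ ζ ∈ Metric.ball (0:ℂ) 1, ‖ζ * g ζ‖ ≤ 1 := by
          intro ζ hζ
          rw [norm_mul]
          have h1 : ‖ζ‖ < 1 := mem_ball_iff_abs.mp hζ
          have h2 : ‖g ζ‖ ≤ 1 := hgb ζ hζ
          nlinarith [norm_nonneg ζ, norm_nonneg (g ζ)]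
        have hFz : ∀ i : Fin (n+1), zh i * g (zh i) = wh i := by
          intro i
          refine Fin.lastCases ?_ ?_ i
          · rw [hzhL, hwhL, zero_mul]
          · intro i
            have h1 : g (z' i) = w' i := hgz i
            rw [hz'def] at h1
            simp only at h1
            rw [h1, hw'def]
            simp only
            rw [mul_comm, div_mul_cancel₀]
            exact hz0 i
        obtain ⟨G, hGd, hGb, hGv⟩ := interp_mob hna hnb (fun ζ => ζ * g ζ) hFd hFb
        refine ⟨G, hGd, hGb, fun i => ?_⟩
        have h1 := hGv (zh i) (mem_ball_iff_abs.mpr (hzh i))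
        rw [hzmm i] at h1
        rw [h1, hFz i, hwmm i]

end PickAux

/-- Pick's theorem: a bounded-by-one holomorphic interpolant on the open unit disk
exists if and only if the Pick matrix is positive semidefinite. -/
theorem pick_theorem (n : ℕ) (hn : 1 ≤ n) (z : Fin n → ℂ)
    (hz : ∀ i, ‖z i‖ < 1) (hinj : Function.Injective z)
    (w : Fin n → ℂ) (hw : ∀ i, ‖w i‖ ≤ 1) :
    (∃ f : ℂ → ℂ, DifferentiableOn ℂ f (Metric.ball (0 : ℂ) 1) ∧
        (∀ ζ ∈ Metric.ball (0 : ℂ) 1, ‖f ζ‖ ≤ 1) ∧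
        (∀ i, f (z i) = w i)) ↔
      (Matrix.of fun i j : Fin n =>
        (1 - w i * (starRingEnd ℂ) (w j)) / (1 - z i * (starRingEnd ℂ) (z j))).PosSemidef :=
  PickAux.pick_aux n z hz hinj w hw
end

section
/- (Stieltjes–Perron inversion formula.) Let ρ : ℝ → ℝ be a nonnegative, bounded, continuous, Lebesgue-integrable function, and define G(z) = ∫ ρ(x)/(x − z) dx (Lebesgue integral) for z in the open upper half-plane. Then for every x₀ ∈ ℝ, lim_{ε → 0⁺} (1/π) · Im G(x₀ + iε) = ρ(x₀). -/
open MeasureTheory Filter Real Set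

private lemma sp_im_eq (ρ : ℝ → ℝ) (hc : Continuous ρ)
    (hi : Integrable ρ) (x₀ : ℝ) {ε : ℝ} (hε : 0 < ε) :
    (∫ x : ℝ, (ρ x : ℂ) / ((x : ℂ) - ((x₀ : ℂ) + ε * Complex.I))).im
      = ∫ x : ℝ, ρ x * (ε / ((x - x₀) ^ 2 + ε ^ 2)) := by
  have hne : ∀ x : ℝ, (x : ℂ) - ((x₀ : ℂ) + ε * Complex.I) ≠ 0 := by
    intro x h
    have h2 := congrArg Complex.im h
    simp [Complex.sub_im, Complex.add_im] at h2
    linarith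
  have hcont : Continuous fun x : ℝ => (ρ x : ℂ) / ((x : ℂ) - ((x₀ : ℂ) + ε * Complex.I)) := by
    exact (Complex.continuous_ofReal.comp hc).div
      (by continuity) hne
  have hnorm : ∀ x : ℝ, ‖(ρ x : ℂ) / ((x : ℂ) - ((x₀ : ℂ) + ε * Complex.I))‖ ≤ ‖|ρ x| / ε‖ := by
    intro x
    rw [norm_div, Real.norm_eq_abs, abs_div, abs_abs, abs_of_pos hε, Complex.norm_real,
      Real.norm_eq_abs]
    gcongr
    calc ε = |(-ε : ℝ)| := by rw [abs_neg, abs_of_pos hε]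
        _ = |((x : ℂ) - ((x₀ : ℂ) + ε * Complex.I)).im| := by
            simp [Complex.sub_im, Complex.add_im]
        _ ≤ ‖(x : ℂ) - ((x₀ : ℂ) + ε * Complex.I)‖ := Complex.abs_im_le_norm _
  have hint : Integrable fun x : ℝ => (ρ x : ℂ) / ((x : ℂ) - ((x₀ : ℂ) + ε * Complex.I)) := by
    refine Integrable.mono ((hi.abs).div_const ε) hcont.aestronglyMeasurable ?_
    exact Filter.Eventually.of_forall hnorm
  rw [← RCLike.im_eq_complex_im, ← integral_im hint]
  congr 1
  funext x
  rw [RCLike.im_eq_complex_im, Complex.div_im]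
  simp [Complex.normSq_apply, Complex.sub_re, Complex.sub_im, Complex.add_re, Complex.add_im]
  ring


private lemma sp_cov (ρ : ℝ → ℝ) (x₀ : ℝ) {ε : ℝ} (hε : 0 < ε) :
    ∫ x : ℝ, ρ x * (ε / ((x - x₀) ^ 2 + ε ^ 2))
      = ∫ t : ℝ, ρ (x₀ + ε * t) * (1 + t ^ 2)⁻¹ := by
  have h1 : (∫ x : ℝ, ρ x * (ε / ((x - x₀) ^ 2 + ε ^ 2)))
      = ∫ u : ℝ, ρ (x₀ + u) * (ε / (u ^ 2 + ε ^ 2)) := by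
    rw [← integral_sub_right_eq_self (fun u => ρ (x₀ + u) * (ε / (u ^ 2 + ε ^ 2))) x₀]
    congr 1
    funext x
    have hx : x₀ + (x - x₀) = x := by ring
    simp only [hx]
  have h3 : ∀ t : ℝ, ρ (x₀ + ε * t) * (1 + t ^ 2)⁻¹
      = ε * (ρ (x₀ + ε * t) * (ε / ((ε * t) ^ 2 + ε ^ 2))) := by
    intro t
    have hpos : (0:ℝ) < (ε * t) ^ 2 + ε ^ 2 := by positivity
    field_simp
    ring
  rw [h1]
  simp_rw [h3]
  rw [MeasureTheory.integral_const_mul,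
    Measure.integral_comp_mul_left (fun u => ρ (x₀ + u) * (ε / (u ^ 2 + ε ^ 2))) ε,
    abs_of_pos (inv_pos.mpr hε), smul_eq_mul, ← mul_assoc, mul_inv_cancel₀ hε.ne', one_mul]

/-- Stieltjes–Perron inversion formula: for a nonnegative, bounded, continuous,
integrable density `ρ`, the imaginary part of the Stieltjes transform recovers `ρ`
in the limit `ε → 0⁺`: `(1/π) Im G(x₀ + iε) → ρ x₀`. -/
theorem stieltjes_perron_inversion (ρ : ℝ → ℝ) (hnn : ∀ x, 0 ≤ ρ x)
    (hb : ∃ M : ℝ, ∀ x : ℝ, ρ x ≤ M) (hc : Continuous ρ)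
    (hi : MeasureTheory.Integrable ρ) (x₀ : ℝ) :
    Filter.Tendsto
      (fun ε : ℝ =>
        (1 / Real.pi) *
          (∫ x : ℝ, (ρ x : ℂ) / ((x : ℂ) - ((x₀ : ℂ) + ε * Complex.I))).im)
      (nhdsWithin 0 (Set.Ioi 0)) (nhds (ρ x₀)) := by
  obtain ⟨M, hM⟩ := hb
  have key : Tendsto (fun ε : ℝ => ∫ t : ℝ, ρ (x₀ + ε * t) * (1 + t ^ 2)⁻¹)
      (nhdsWithin 0 (Set.Ioi 0)) (nhds (∫ t : ℝ, ρ x₀ * (1 + t ^ 2)⁻¹)) := by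
    apply tendsto_integral_filter_of_dominated_convergence (fun t => M * (1 + t ^ 2)⁻¹)
    · apply Eventually.of_forall; intro ε
      exact ((hc.comp (by continuity)).mul ((continuous_const.add (continuous_pow 2)).inv₀ (fun t => (by positivity : (0:ℝ) < 1 + t ^ 2).ne'))).aestronglyMeasurable
    · apply Eventually.of_forall; intro ε
      apply Eventually.of_forall; intro t
      rw [Real.norm_eq_abs, abs_mul, abs_of_nonneg (hnn _),
        abs_of_nonneg (by positivity : (0:ℝ) ≤ (1 + t ^ 2)⁻¹)]
      gcongr
      exact hM _
    · exact integrable_inv_one_add_sq.const_mul M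
    · apply Eventually.of_forall; intro t
      have h0 : Tendsto (fun ε : ℝ => x₀ + ε * t) (nhdsWithin 0 (Set.Ioi 0))
          (nhds (x₀ + 0 * t)) :=
        Tendsto.mono_left ((continuous_const.add (continuous_id.mul continuous_const)).tendsto 0)
          nhdsWithin_le_nhds
      simpa using ((hc.tendsto _).comp h0).mul (tendsto_const_nhds (x := (1 + t ^ 2)⁻¹))
  have hlim : (∫ t : ℝ, ρ x₀ * (1 + t ^ 2)⁻¹) = ρ x₀ * π := by
    rw [MeasureTheory.integral_const_mul, integral_univ_inv_one_add_sq]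
  rw [hlim] at key
  have key2 : Tendsto (fun ε : ℝ => (1 / π) * ∫ t : ℝ, ρ (x₀ + ε * t) * (1 + t ^ 2)⁻¹)
      (nhdsWithin 0 (Set.Ioi 0)) (nhds (ρ x₀)) := by
    have := key.const_mul (1 / π)
    have hπ : (1 / π) * (ρ x₀ * π) = ρ x₀ := by
      field_simp
    rwa [hπ] at this
  apply key2.congr'
  filter_upwards [self_mem_nhdsWithin] with ε hε
  rw [sp_im_eq ρ hc hi x₀ hε, sp_cov ρ x₀ hε]
end

section
/- (Uniqueness for extremal Pick problems.) Let n ≥ 1, let z : Fin n → ℂ be pairwise distinct points in the open unit disk 𝔻, and let w : Fin n → ℂ with |w i| ≤ 1 for all i. Suppose the Pick matrix P with entries P_{ij} = (1 − w i * conj (w j)) / (1 − z i * conj (z j)) is positive semidefinite and singular (det P = 0). Then any two functions f, g that are complex-differentiable on 𝔻 with values of modulus at most 1 on 𝔻 and satisfy f(z i) = w i = g(z i) for all i must agree on all of 𝔻. -/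
open Complex Metric Real intervalIntegral Filter
open scoped ComplexOrder Topology

lemma one_sub_ne {x : ℂ} (h : ‖x‖ < 1) : (1:ℂ) - x ≠ 0 := by
  intro h0
  have : x = 1 := by linear_combination -h0
  simp [this] at h


/-- Cauchy–Schwarz for interval integrals of continuous real functions. -/
lemma cs_int {F G : ℝ → ℝ} (hF : Continuous F) (hG : Continuous G) :
    (∫ θ in (0:ℝ)..(2*π), F θ * G θ) ≤
      Real.sqrt (∫ θ in (0:ℝ)..(2*π), (F θ)^2) * Real.sqrt (∫ θ in (0:ℝ)..(2*π), (G θ)^2) := by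
  set A := ∫ θ in (0:ℝ)..(2*π), (F θ)^2 with hA
  set B := ∫ θ in (0:ℝ)..(2*π), (G θ)^2 with hB
  set C := ∫ θ in (0:ℝ)..(2*π), F θ * G θ with hC
  have h2π : (0:ℝ) ≤ 2*π := by positivity
  have hAnn : 0 ≤ A := intervalIntegral.integral_nonneg h2π (fun x _ => sq_nonneg _)
  have hBnn : 0 ≤ B := intervalIntegral.integral_nonneg h2π (fun x _ => sq_nonneg _)
  have quad : ∀ t : ℝ, 0 ≤ A * (t*t) + (2*C) * t + B := by
    intro t
    have h0 : 0 ≤ ∫ θ in (0:ℝ)..(2*π), (t * F θ + G θ)^2 :=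
      intervalIntegral.integral_nonneg h2π (fun x _ => sq_nonneg _)
    have hexp : (∫ θ in (0:ℝ)..(2*π), (t * F θ + G θ)^2)
        = A * (t*t) + (2*C) * t + B := by
      have h1 : ∀ θ : ℝ, (t * F θ + G θ)^2
          = (t*t) * (F θ)^2 + (2*t) * (F θ * G θ) + (G θ)^2 := by intro θ; ring
      rw [intervalIntegral.integral_congr
        (g := fun θ => (t*t) * (F θ)^2 + (2*t) * (F θ * G θ) + (G θ)^2) (fun θ _ => h1 θ)]
      have i1 : IntervalIntegrable (fun θ => (t*t) * (F θ)^2) MeasureTheory.volume 0 (2*π) :=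
        ((continuous_const.mul (hF.pow 2)).intervalIntegrable _ _)
      have i2 : IntervalIntegrable (fun θ => (2*t) * (F θ * G θ)) MeasureTheory.volume 0 (2*π) :=
        ((continuous_const.mul (hF.mul hG)).intervalIntegrable _ _)
      have i3 : IntervalIntegrable (fun θ => (G θ)^2) MeasureTheory.volume 0 (2*π) :=
        ((hG.pow 2).intervalIntegrable _ _)
      rw [intervalIntegral.integral_add (i1.add i2) i3, intervalIntegral.integral_add i1 i2,
        intervalIntegral.integral_const_mul, intervalIntegral.integral_const_mul]
      ring
    linarith [hexp ▸ h0]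
  have hd := discrim_le_zero quad
  rw [discrim] at hd
  have hC2 : C^2 ≤ A * B := by nlinarith
  calc C ≤ |C| := le_abs_self C
    _ = Real.sqrt (C^2) := (Real.sqrt_sq_eq_abs C).symm
    _ ≤ Real.sqrt (A*B) := Real.sqrt_le_sqrt hC2
    _ = Real.sqrt A * Real.sqrt B := Real.sqrt_mul hAnn B

/-- Cauchy integral formula against a conjugated Szegő kernel on the circle of radius `r`. -/
lemma cauchy_kernel {F : ℂ → ℂ} (hF : DifferentiableOn ℂ F (ball 0 1)) {r : ℝ}
    (hr0 : 0 < r) (hr1 : r < 1) {p : ℂ} (hp : ‖p‖ < 1) :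
    (∫ θ in (0:ℝ)..(2*π),
        F (circleMap 0 r θ) * (starRingEnd ℂ) ((1 - circleMap 0 r θ * (starRingEnd ℂ) p)⁻¹))
      = 2 * π * F ((r:ℂ)^2 * p) := by
  have habsw : ‖(r:ℂ)^2 * p‖ = r^2 * ‖p‖ := by
    simp [map_mul, map_pow, _root_.abs_of_pos hr0]
  have hw : (r:ℂ)^2 * p ∈ ball (0:ℂ) r := by
    rw [mem_ball_zero_iff, habsw]
    nlinarith [norm_nonneg p]
  have hsub : closedBall (0:ℂ) r ⊆ ball 0 1 := closedBall_subset_ball hr1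
  have hd : DiffContOnCl ℂ F (ball 0 r) :=
    ⟨hF.mono (ball_subset_ball hr1.le), by
      rw [closure_ball (0:ℂ) hr0.ne']; exact hF.continuousOn.mono hsub⟩
  have hc := hd.circleIntegral_sub_inv_smul hw
  rw [circleIntegral] at hc
  have key : ∀ θ : ℝ, deriv (circleMap 0 r) θ •
      ((circleMap 0 r θ - (r:ℂ)^2*p)⁻¹ • F (circleMap 0 r θ))
      = Complex.I * (F (circleMap 0 r θ) *
          (starRingEnd ℂ) ((1 - circleMap 0 r θ * (starRingEnd ℂ) p)⁻¹)) := by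
    intro θ
    rw [deriv_circleMap]
    set s := circleMap 0 r θ with hs
    have hs0 : s ≠ 0 := by
      rw [hs, ← sub_zero (circleMap 0 r θ)]
      exact sub_ne_zero.mpr (circleMap_ne_center hr0.ne')
    have habs : ‖s‖ = r := by
      rw [hs]; simpa [_root_.abs_of_pos hr0] using norm_circleMap_zero r θ
    have hmc : s * (starRingEnd ℂ) s = ((r:ℂ))^2 := by
      rw [Complex.mul_conj, Complex.normSq_eq_norm_sq, habs]; push_cast; ring
    have hne : s - (r:ℂ)^2 * p ≠ 0 := by
      intro h0
      have h1 := sub_eq_zero.mp h0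
      rw [← h1, habs] at habsw
      nlinarith [norm_nonneg p]
    have hker : (starRingEnd ℂ) ((1 - s * (starRingEnd ℂ) p)⁻¹) = s * (s - (r:ℂ)^2*p)⁻¹ := by
      rw [map_inv₀, map_sub, map_one, map_mul, Complex.conj_conj]
      refine inv_eq_of_mul_eq_one_right ?_
      rw [← mul_assoc, mul_inv_eq_one₀ hne]
      linear_combination -p * hmc
    rw [hker]
    simp only [smul_eq_mul]
    field_simp
  rw [intervalIntegral.integral_congr (g := fun θ => Complex.I *
      (F (circleMap 0 r θ) * (starRingEnd ℂ) ((1 - circleMap 0 r θ * (starRingEnd ℂ) p)⁻¹)))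
      (fun θ _ => key θ), intervalIntegral.integral_const_mul, smul_eq_mul] at hc
  have hI : (Complex.I : ℂ) ≠ 0 := Complex.I_ne_zero
  apply mul_left_cancel₀ hI
  rw [hc]; ring

/-- Necessity of positivity of the Pick quadratic form for Schur functions. -/
theorem pick_nec (m : ℕ) (p : Fin m → ℂ) (hp : ∀ i, ‖p i‖ < 1)
    (f : ℂ → ℂ) (hf : DifferentiableOn ℂ f (ball 0 1))
    (hfb : ∀ ζ ∈ ball (0:ℂ) 1, ‖f ζ‖ ≤ 1)
    (u : Fin m → ℂ) :
    0 ≤ ∑ i, ∑ j, u i * (starRingEnd ℂ) (u j) * (1 - f (p i) * (starRingEnd ℂ) (f (p j)))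
          / (1 - p i * (starRingEnd ℂ) (p j)) := by
  have hpmem : ∀ i, p i ∈ ball (0:ℂ) 1 := fun i => by
    rw [mem_ball_zero_iff]; exact hp i
  have hker_ne : ∀ (a s : ℂ), ‖a‖ < 1 → s ∈ ball (0:ℂ) 1 →
      (1:ℂ) - s * (starRingEnd ℂ) a ≠ 0 := by
    intro a s ha hs
    apply one_sub_ne
    rw [norm_mul, Complex.norm_conj]
    rw [mem_ball_zero_iff] at hs
    nlinarith [norm_nonneg a, norm_nonneg s]
  have hker_diff : ∀ a : ℂ, ‖a‖ < 1 → ∀ s ∈ ball (0:ℂ) 1,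
      DifferentiableAt ℂ (fun s : ℂ => ((1:ℂ) - s * (starRingEnd ℂ) a)⁻¹) s := by
    intro a ha s hs
    exact (((differentiableAt_const (1:ℂ)).sub (differentiableAt_id.mul_const _)).inv
      (hker_ne a s ha hs))
  set G : ℂ → ℂ :=
    fun s => ∑ i, (starRingEnd ℂ) (u i) * (starRingEnd ℂ) (f (p i))
      * (1 - s * (starRingEnd ℂ) (p i))⁻¹ with hGdef
  set h : ℂ → ℂ :=
    fun s => ∑ i, (starRingEnd ℂ) (u i) * (1 - s * (starRingEnd ℂ) (p i))⁻¹ with hhdef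
  have hGdiff : ∀ s ∈ ball (0:ℂ) 1, DifferentiableAt ℂ G s := by
    intro s hs
    apply DifferentiableAt.fun_sum
    intro i _
    exact (hker_diff (p i) (hp i) s hs).const_mul _
  have hhdiff : ∀ s ∈ ball (0:ℂ) 1, DifferentiableAt ℂ h s := by
    intro s hs
    apply DifferentiableAt.fun_sum
    intro i _
    exact (hker_diff (p i) (hp i) s hs).const_mul _
  have hfd : ∀ s ∈ ball (0:ℂ) 1, DifferentiableAt ℂ f s :=
    fun s hs => hf.differentiableAt (isOpen_ball.mem_nhds hs)
  -- quantities
  set 𝒞 : ℝ → ℂ := fun r => ∑ j, u j * (f ((r:ℂ)^2 * p j) * G ((r:ℂ)^2 * p j)) with hCdef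
  set 𝒮 : ℝ → ℂ := fun r => ∑ j, u j * (f (p j) * G ((r:ℂ)^2 * p j)) with hSdef
  set 𝒯 : ℝ → ℂ := fun r => ∑ j, u j * h ((r:ℂ)^2 * p j) with hTdef
  have main_r : ∀ r : ℝ, r ∈ Set.Ioo (0:ℝ) 1 →
      ‖𝒞 r‖ ≤ Real.sqrt ((𝒮 r).re) * Real.sqrt ((𝒯 r).re)
        ∧ (𝒮 r).im = 0 ∧ 0 ≤ (𝒮 r).re ∧ (𝒯 r).im = 0 ∧ 0 ≤ (𝒯 r).re := by
    intro r hr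
    obtain ⟨hr0, hr1⟩ := hr
    set c : ℝ → ℂ := circleMap 0 r with hcdef
    have hcmem : ∀ θ, c θ ∈ ball (0:ℂ) 1 := by
      intro θ
      rw [mem_ball_zero_iff]
      have := norm_circleMap_zero r θ
      rw [hcdef]
      rw [this, _root_.abs_of_pos hr0]; exact hr1
    have hccont : Continuous c := continuous_circleMap 0 r
    have hfcont : Continuous fun θ => f (c θ) :=
      continuous_iff_continuousAt.mpr fun θ =>
        ((hfd _ (hcmem θ)).continuousAt).comp hccont.continuousAt
    have hGcont : Continuous fun θ => G (c θ) :=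
      continuous_iff_continuousAt.mpr fun θ =>
        ((hGdiff _ (hcmem θ)).continuousAt).comp hccont.continuousAt
    have hhcont : Continuous fun θ => h (c θ) :=
      continuous_iff_continuousAt.mpr fun θ =>
        ((hhdiff _ (hcmem θ)).continuousAt).comp hccont.continuousAt
    have hkcont : ∀ i : Fin m, Continuous fun θ =>
        (starRingEnd ℂ) (((1:ℂ) - c θ * (starRingEnd ℂ) (p i))⁻¹) := by
      intro i
      exact Complex.continuous_conj.comp
        ((continuous_const.sub (hccont.mul continuous_const)).inv₀
          (fun θ => hker_ne _ _ (hp i) (hcmem θ)))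
    -- inner products with sums of kernels
    have inner_eq : ∀ (F : ℂ → ℂ), DifferentiableOn ℂ F (ball 0 1) →
        (Continuous fun θ => F (c θ)) → ∀ d : Fin m → ℂ,
        (∫ θ in (0:ℝ)..(2*π), F (c θ) *
            (starRingEnd ℂ) (∑ i, d i * (1 - c θ * (starRingEnd ℂ) (p i))⁻¹))
          = 2*π * ∑ i, (starRingEnd ℂ) (d i) * F ((r:ℂ)^2 * p i) := by
      intro F hFd hFc d
      have hpt : ∀ θ : ℝ, F (c θ) *
            (starRingEnd ℂ) (∑ i, d i * (1 - c θ * (starRingEnd ℂ) (p i))⁻¹)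
          = ∑ i, (starRingEnd ℂ) (d i) *
              (F (c θ) * (starRingEnd ℂ) ((1 - c θ * (starRingEnd ℂ) (p i))⁻¹)) := by
        intro θ
        rw [map_sum, Finset.mul_sum]
        refine Finset.sum_congr rfl fun i _ => ?_
        rw [map_mul]; ring
      rw [intervalIntegral.integral_congr (fun θ _ => hpt θ)]
      rw [intervalIntegral.integral_finset_sum (f := fun i θ => (starRingEnd ℂ) (d i) *
          (F (c θ) * (starRingEnd ℂ) ((1 - c θ * (starRingEnd ℂ) (p i))⁻¹))) (fun i _ =>
        ((continuous_const.mul (hFc.mul (hkcont i))).intervalIntegrable _ _))]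
      rw [Finset.mul_sum]
      refine Finset.sum_congr rfl fun i _ => ?_
      rw [intervalIntegral.integral_const_mul, cauchy_kernel hFd hr0 hr1 (hp i)]
      ring
    have hCeq : (∫ θ in (0:ℝ)..(2*π), (f (c θ) * G (c θ)) * (starRingEnd ℂ) (h (c θ)))
        = 2*π * 𝒞 r := by
      have := inner_eq (fun s => f s * G s)
        (fun s hs => ((hfd s hs).mul (hGdiff s hs)).differentiableWithinAt)
        (hfcont.mul hGcont) (fun i => (starRingEnd ℂ) (u i))
      simp only [Complex.conj_conj] at this
      rw [hhdef, hCdef]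
      exact this
    have hSeq : (∫ θ in (0:ℝ)..(2*π), G (c θ) * (starRingEnd ℂ) (G (c θ)))
        = 2*π * 𝒮 r := by
      have := inner_eq G (fun s hs => (hGdiff s hs).differentiableWithinAt) hGcont
        (fun i => (starRingEnd ℂ) (u i) * (starRingEnd ℂ) (f (p i)))
      simp only [map_mul, Complex.conj_conj] at this
      refine this.trans ?_
      congr 1
      rw [hSdef]
      exact Finset.sum_congr rfl fun i _ => by ring
    have hTeq : (∫ θ in (0:ℝ)..(2*π), h (c θ) * (starRingEnd ℂ) (h (c θ)))
        = 2*π * 𝒯 r := by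
      have := inner_eq h (fun s hs => (hhdiff s hs).differentiableWithinAt) hhcont
        (fun i => (starRingEnd ℂ) (u i))
      simp only [Complex.conj_conj] at this
      rw [hhdef, hTdef]
      exact this
    -- real-ness of diagonal inner products
    have self_real : ∀ (x : ℂ → ℂ),
        (∫ θ in (0:ℝ)..(2*π), x (c θ) * (starRingEnd ℂ) (x (c θ)))
          = ((∫ θ in (0:ℝ)..(2*π), (‖x (c θ)‖)^2 : ℝ) : ℂ) := by
      intro x
      rw [← intervalIntegral.integral_ofReal]
      refine intervalIntegral.integral_congr fun θ _ => ?_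
      rw [Complex.mul_conj, Complex.normSq_eq_norm_sq]
    have hπ : (0:ℝ) < 2*π := by positivity
    have h2πne : ((2*π : ℝ) : ℂ) ≠ 0 := by
      simp only [ne_eq, Complex.ofReal_eq_zero]; positivity
    set X := ∫ θ in (0:ℝ)..(2*π), (‖G (c θ)‖)^2 with hXdef
    set Y := ∫ θ in (0:ℝ)..(2*π), (‖h (c θ)‖)^2 with hYdef
    have hXnn : 0 ≤ X := intervalIntegral.integral_nonneg hπ.le (fun _ _ => sq_nonneg _)
    have hYnn : 0 ≤ Y := intervalIntegral.integral_nonneg hπ.le (fun _ _ => sq_nonneg _)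
    have hSval : 𝒮 r = ((X/(2*π) : ℝ) : ℂ) := by
      have h1 : (2*π : ℂ) * 𝒮 r = (X : ℂ) := by rw [← hSeq, self_real G]
      apply mul_left_cancel₀ h2πne
      rw [← Complex.ofReal_mul, mul_div_cancel₀ _ hπ.ne']
      push_cast at h1 ⊢
      linear_combination h1
    have hTval : 𝒯 r = ((Y/(2*π) : ℝ) : ℂ) := by
      have h1 : (2*π : ℂ) * 𝒯 r = (Y : ℂ) := by rw [← hTeq, self_real h]
      apply mul_left_cancel₀ h2πne
      rw [← Complex.ofReal_mul, mul_div_cancel₀ _ hπ.ne']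
      push_cast at h1 ⊢
      linear_combination h1
    have hSre : (𝒮 r).re = X/(2*π) := by rw [hSval]; exact Complex.ofReal_re _
    have hTre : (𝒯 r).re = Y/(2*π) := by rw [hTval]; exact Complex.ofReal_re _
    -- the inequality
    have hfG_cont : Continuous fun θ => ‖f (c θ) * G (c θ)‖ :=
      continuous_norm.comp (hfcont.mul hGcont)
    have hh_cont : Continuous fun θ => ‖h (c θ)‖ :=
      continuous_norm.comp hhcont
    have hstep1 : ‖(2*π : ℂ) * 𝒞 r‖
        ≤ ∫ θ in (0:ℝ)..(2*π), ‖f (c θ) * G (c θ)‖ * ‖h (c θ)‖ := by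
      rw [← hCeq]
      calc ‖∫ θ in (0:ℝ)..(2*π), (f (c θ) * G (c θ)) * (starRingEnd ℂ) (h (c θ))‖
          ≤ ∫ θ in (0:ℝ)..(2*π), ‖(f (c θ) * G (c θ)) * (starRingEnd ℂ) (h (c θ))‖ :=
            intervalIntegral.norm_integral_le_integral_norm hπ.le
        _ = _ := by
            refine intervalIntegral.integral_congr fun θ _ => ?_
            rw [norm_mul, Complex.norm_conj]
    have hstep2 : (∫ θ in (0:ℝ)..(2*π), ‖f (c θ) * G (c θ)‖ * ‖h (c θ)‖)
        ≤ Real.sqrt (∫ θ in (0:ℝ)..(2*π), (‖f (c θ) * G (c θ)‖)^2) * Real.sqrt Y :=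
      cs_int hfG_cont hh_cont
    have hstep3 : (∫ θ in (0:ℝ)..(2*π), (‖f (c θ) * G (c θ)‖)^2) ≤ X := by
      refine intervalIntegral.integral_mono_on hπ.le
        ((hfG_cont.pow 2).intervalIntegrable _ _)
        (((continuous_norm.comp hGcont).pow 2).intervalIntegrable _ _)
        (fun θ _ => ?_)
      rw [norm_mul, mul_pow]
      have h1 : ‖f (c θ)‖ ≤ 1 := hfb _ (hcmem θ)
      have h2 : (‖f (c θ)‖)^2 ≤ 1 := by
        nlinarith [norm_nonneg (f (c θ))]
      nlinarith [sq_nonneg (‖G (c θ)‖), h2]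
    have hmain : ‖(2*π:ℂ) * 𝒞 r‖ ≤ Real.sqrt X * Real.sqrt Y := by
      calc ‖(2*π:ℂ) * 𝒞 r‖ ≤ _ := hstep1
        _ ≤ _ := hstep2
        _ ≤ Real.sqrt X * Real.sqrt Y := by
            have := Real.sqrt_le_sqrt hstep3
            exact mul_le_mul_of_nonneg_right this (Real.sqrt_nonneg _)
    have habs2π : ‖(2*π:ℂ) * 𝒞 r‖ = (2*π) * ‖𝒞 r‖ := by
      rw [norm_mul]
      congr 1
      rw [show ((2*π:ℂ)) = ((2*π:ℝ):ℂ) by push_cast; ring, Complex.norm_real, Real.norm_eq_abs,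
        _root_.abs_of_pos hπ]
    refine ⟨?_, by rw [hSval]; exact Complex.ofReal_im _, by rw [hSre]; positivity,
      by rw [hTval]; exact Complex.ofReal_im _, by rw [hTre]; positivity⟩
    rw [hSre, hTre, Real.sqrt_div hXnn, Real.sqrt_div hYnn, div_mul_div_comm,
      Real.mul_self_sqrt hπ.le, le_div_iff₀ hπ]
    rw [habs2π] at hmain
    linarith
  -- limits as r → 1⁻
  have hball1 : ∀ j, Filter.Tendsto (fun r : ℝ => ((r:ℂ)^2 * p j)) (𝓝[<] (1:ℝ)) (𝓝 (p j)) := by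
    intro j
    have hcont : Continuous fun r : ℝ => ((r:ℂ)^2 * p j) :=
      (Complex.continuous_ofReal.pow 2).mul continuous_const
    have h2 := (hcont.tendsto 1).mono_left (nhdsWithin_le_nhds (s := Set.Iio (1:ℝ)))
    simpa using h2
  have hlim : ∀ (φ : ℂ → ℂ), (∀ s ∈ ball (0:ℂ) 1, ContinuousAt φ s) → ∀ j : Fin m,
      Filter.Tendsto (fun r : ℝ => φ ((r:ℂ)^2 * p j)) (𝓝[<] (1:ℝ)) (𝓝 (φ (p j))) :=
    fun φ hφ j => ((hφ _ (hpmem j)).tendsto).comp (hball1 j)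
  set Sl : ℂ := ∑ j, u j * (f (p j) * G (p j)) with hSl
  set Tl : ℂ := ∑ j, u j * h (p j) with hTl
  have hStend : Filter.Tendsto 𝒮 (𝓝[<] (1:ℝ)) (𝓝 Sl) := by
    rw [hSdef, hSl]
    refine tendsto_finset_sum _ fun j _ => ?_
    exact tendsto_const_nhds.mul (tendsto_const_nhds.mul
      (hlim G (fun s hs => (hGdiff s hs).continuousAt) j))
  have hTtend : Filter.Tendsto 𝒯 (𝓝[<] (1:ℝ)) (𝓝 Tl) := by
    rw [hTdef, hTl]
    refine tendsto_finset_sum _ fun j _ => ?_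
    exact tendsto_const_nhds.mul (hlim h (fun s hs => (hhdiff s hs).continuousAt) j)
  have hCtend : Filter.Tendsto 𝒞 (𝓝[<] (1:ℝ)) (𝓝 Sl) := by
    rw [hCdef, hSl]
    refine tendsto_finset_sum _ fun j _ => ?_
    exact tendsto_const_nhds.mul
      ((hlim f (fun s hs => (hfd s hs).continuousAt) j).mul
        (hlim G (fun s hs => (hGdiff s hs).continuousAt) j))
  have hev : Set.Ioo (0:ℝ) 1 ∈ 𝓝[<] (1:ℝ) :=
    Ioo_mem_nhdsLT_of_mem ⟨by norm_num, le_refl 1⟩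
  have hSim : Sl.im = 0 := by
    have h1 : Filter.Tendsto (fun r => (𝒮 r).im) (𝓝[<] (1:ℝ)) (𝓝 Sl.im) :=
      (Complex.continuous_im.tendsto _).comp hStend
    have h2 : Filter.Tendsto (fun r => (𝒮 r).im) (𝓝[<] (1:ℝ)) (𝓝 0) := by
      refine Filter.Tendsto.congr' ?_ (tendsto_const_nhds (α := ℝ))
      filter_upwards [hev] with r hr
      exact ((main_r r hr).2.1).symm
    exact tendsto_nhds_unique h1 h2
  have hTim : Tl.im = 0 := by
    have h1 : Filter.Tendsto (fun r => (𝒯 r).im) (𝓝[<] (1:ℝ)) (𝓝 Tl.im) :=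
      (Complex.continuous_im.tendsto _).comp hTtend
    have h2 : Filter.Tendsto (fun r => (𝒯 r).im) (𝓝[<] (1:ℝ)) (𝓝 0) := by
      refine Filter.Tendsto.congr' ?_ (tendsto_const_nhds (α := ℝ))
      filter_upwards [hev] with r hr
      exact ((main_r r hr).2.2.2.1).symm
    exact tendsto_nhds_unique h1 h2
  have hSre : 0 ≤ Sl.re := by
    refine le_of_tendsto_of_tendsto (tendsto_const_nhds (α := ℝ))
      ((Complex.continuous_re.tendsto _).comp hStend) ?_
    filter_upwards [hev] with r hr
    exact (main_r r hr).2.2.1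
  have hTre : 0 ≤ Tl.re := by
    refine le_of_tendsto_of_tendsto (tendsto_const_nhds (α := ℝ))
      ((Complex.continuous_re.tendsto _).comp hTtend) ?_
    filter_upwards [hev] with r hr
    exact (main_r r hr).2.2.2.2
  have hineq : ‖Sl‖ ≤ Real.sqrt Sl.re * Real.sqrt Tl.re := by
    refine le_of_tendsto_of_tendsto
      ((continuous_norm.tendsto _).comp hCtend)
      (((Real.continuous_sqrt.tendsto _).comp
          ((Complex.continuous_re.tendsto _).comp hStend)).mul
        ((Real.continuous_sqrt.tendsto _).comp
          ((Complex.continuous_re.tendsto _).comp hTtend))) ?_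
    filter_upwards [hev] with r hr
    exact (main_r r hr).1
  have hSreal : Sl = ((Sl.re : ℝ) : ℂ) := Complex.ext (by simp) (by simp [hSim])
  have habsS : ‖Sl‖ = |Sl.re| := by rw [hSreal]; exact Complex.norm_real _
  have hfinal : Sl.re ≤ Tl.re := by
    have h1 : Sl.re ≤ Real.sqrt Sl.re * Real.sqrt Tl.re := by
      calc Sl.re ≤ |Sl.re| := le_abs_self _
        _ = ‖Sl‖ := habsS.symm
        _ ≤ _ := hineq
    nlinarith [Real.sq_sqrt hSre, Real.sq_sqrt hTre, Real.sqrt_nonneg Sl.re,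
      Real.sqrt_nonneg Tl.re, sq_nonneg (Real.sqrt Sl.re - Real.sqrt Tl.re)]
  -- identify the quadratic form
  have hQ : (∑ i, ∑ j, u i * (starRingEnd ℂ) (u j) * (1 - f (p i) * (starRingEnd ℂ) (f (p j)))
          / (1 - p i * (starRingEnd ℂ) (p j))) = Tl - Sl := by
    rw [hTl, hSl, ← Finset.sum_sub_distrib]
    refine Finset.sum_congr rfl fun i _ => ?_
    rw [hGdef, hhdef]
    dsimp only
    simp only [Finset.mul_sum]
    rw [← Finset.sum_sub_distrib]
    refine Finset.sum_congr rfl fun j _ => ?_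
    rw [div_eq_mul_inv]
    ring
  rw [hQ, Complex.le_def]
  constructor
  · simp only [Complex.zero_re, Complex.sub_re]
    linarith
  · simp [Complex.sub_im, hSim, hTim]

/-- Uniqueness for extremal Pick problems: if the Pick matrix is positive
semidefinite and singular, any two Schur-class interpolants of the data agree on the
whole open unit disk. -/
theorem extremal_pick_unique (n : ℕ) (hn : 1 ≤ n) (z : Fin n → ℂ)
    (hz : ∀ i, ‖z i‖ < 1) (hinj : Function.Injective z)
    (w : Fin n → ℂ) (hw : ∀ i, ‖w i‖ ≤ 1)
    (hP : (Matrix.of fun i j : Fin n =>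
      (1 - w i * (starRingEnd ℂ) (w j)) / (1 - z i * (starRingEnd ℂ) (z j))).PosSemidef)
    (hdet : (Matrix.of fun i j : Fin n =>
      (1 - w i * (starRingEnd ℂ) (w j)) / (1 - z i * (starRingEnd ℂ) (z j))).det = 0)
    (f g : ℂ → ℂ)
    (hf : DifferentiableOn ℂ f (Metric.ball (0 : ℂ) 1))
    (hfb : ∀ ζ ∈ Metric.ball (0 : ℂ) 1, ‖f ζ‖ ≤ 1)
    (hg : DifferentiableOn ℂ g (Metric.ball (0 : ℂ) 1))
    (hgb : ∀ ζ ∈ Metric.ball (0 : ℂ) 1, ‖g ζ‖ ≤ 1)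
    (hfz : ∀ i, f (z i) = w i) (hgz : ∀ i, g (z i) = w i) :
    Set.EqOn f g (Metric.ball (0 : ℂ) 1) := by
  classical
  obtain ⟨v, hv, hPv⟩ := Matrix.exists_mulVec_eq_zero_iff.mpr hdet
  -- the key vanishing identity for any Schur interpolant
  have key : ∀ (F : ℂ → ℂ), DifferentiableOn ℂ F (ball 0 1) →
      (∀ ζ ∈ ball (0:ℂ) 1, ‖F ζ‖ ≤ 1) → (∀ i, F (z i) = w i) →
      ∀ ζ ∈ ball (0:ℂ) 1,
      (∑ i, (starRingEnd ℂ) (v i) *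
        ((1 - w i * (starRingEnd ℂ) (F ζ)) / (1 - z i * (starRingEnd ℂ) ζ))) = 0 := by
    intro F hFd hFb hFz ζ hζ
    set β := ∑ i, (starRingEnd ℂ) (v i) *
        ((1 - w i * (starRingEnd ℂ) (F ζ)) / (1 - z i * (starRingEnd ℂ) ζ)) with hβ
    by_contra hβne
    set cc : ℂ := (1 - F ζ * (starRingEnd ℂ) (F ζ)) / (1 - ζ * (starRingEnd ℂ) ζ) with hcc
    set s : ℝ := 1/(1 + |cc.re|) with hs
    have hs0 : 0 < s := by positivity
    set t : ℂ := -(s:ℂ) * β with ht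
    set pp : Fin (n+1) → ℂ := Fin.snoc z ζ with hpp
    set x : Fin (n+1) → ℂ := Fin.snoc (fun i => (starRingEnd ℂ) (v i)) t with hx
    have hppb : ∀ i, ‖pp i‖ < 1 := by
      intro i
      refine Fin.lastCases ?_ ?_ i
      · rw [hpp, Fin.snoc_last]
        simpa using mem_ball_zero_iff.mp hζ
      · intro j
        rw [hpp, Fin.snoc_castSucc]
        exact hz j
    have h0 := pick_nec (n+1) pp hppb F hFd hFb x
    have hconjβ : (starRingEnd ℂ) β = ∑ j, v j *
        ((1 - F ζ * (starRingEnd ℂ) (w j)) / ((1:ℂ) - ζ * (starRingEnd ℂ) (z j))) := by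
      rw [hβ, map_sum]
      refine Finset.sum_congr rfl fun j _ => ?_
      simp only [map_mul, map_div₀, map_sub, map_one, Complex.conj_conj]
      ring
    set D : ℂ := ∑ i : Fin n, ∑ j : Fin n, (starRingEnd ℂ) (v i) * v j *
        (1 - w i * (starRingEnd ℂ) (w j)) / (1 - z i * (starRingEnd ℂ) (z j)) with hD
    have hDzero : D = 0 := by
      rw [hD]
      have h1 : ∀ i : Fin n, (∑ j, ((1 - w i * (starRingEnd ℂ) (w j))
          / (1 - z i * (starRingEnd ℂ) (z j))) * v j) = 0 := by
        intro i
        have h2 := congrFun hPv i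
        simpa [Matrix.mulVec, dotProduct, Matrix.of_apply] using h2
      calc (∑ i : Fin n, ∑ j : Fin n, (starRingEnd ℂ) (v i) * v j *
            (1 - w i * (starRingEnd ℂ) (w j)) / (1 - z i * (starRingEnd ℂ) (z j)))
          = ∑ i : Fin n, (starRingEnd ℂ) (v i) * ∑ j, ((1 - w i * (starRingEnd ℂ) (w j))
              / (1 - z i * (starRingEnd ℂ) (z j))) * v j := by
            refine Finset.sum_congr rfl fun i _ => ?_
            rw [Finset.mul_sum]
            refine Finset.sum_congr rfl fun j _ => ?_
            rw [div_eq_mul_inv, div_eq_mul_inv]; ring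
        _ = 0 := by simp [h1]
    have e : (∑ i, ∑ j, x i * (starRingEnd ℂ) (x j) *
          (1 - F (pp i) * (starRingEnd ℂ) (F (pp j))) / (1 - pp i * (starRingEnd ℂ) (pp j)))
        = D + ((starRingEnd ℂ) t * β) + ((t * (starRingEnd ℂ) β) +
            t * (starRingEnd ℂ) t * cc) := by
      simp only [Fin.sum_univ_castSucc, hx, hpp, Fin.snoc_castSucc, Fin.snoc_last, hFz,
        Complex.conj_conj]
      rw [Finset.sum_add_distrib]
      have q2 : (∑ i : Fin n, (starRingEnd ℂ) (v i) * (starRingEnd ℂ) t *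
            (1 - w i * (starRingEnd ℂ) (F ζ)) / (1 - z i * (starRingEnd ℂ) ζ))
          = (starRingEnd ℂ) t * β := by
        rw [hβ, Finset.mul_sum]
        exact Finset.sum_congr rfl fun i _ => by rw [div_eq_mul_inv, div_eq_mul_inv]; ring
      have q3 : (∑ i : Fin n, t * v i *
            (1 - F ζ * (starRingEnd ℂ) (w i)) / (1 - ζ * (starRingEnd ℂ) (z i)))
          = t * (starRingEnd ℂ) β := by
        rw [hconjβ, Finset.mul_sum]
        exact Finset.sum_congr rfl fun i _ => by rw [div_eq_mul_inv, div_eq_mul_inv]; ring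
      rw [q2, q3, mul_div_assoc, ← hcc, ← hD]
    rw [e, hDzero, zero_add] at h0
    -- now compute the real part
    have hx1 : (starRingEnd ℂ) t * β = ↑(-(s * Complex.normSq β)) := by
      rw [ht, map_mul, map_neg, Complex.conj_ofReal]
      push_cast
      rw [mul_assoc]
      rw [mul_comm ((starRingEnd ℂ) β) β, Complex.mul_conj]
      push_cast; ring
    have hx2 : t * (starRingEnd ℂ) β = ↑(-(s * Complex.normSq β)) := by
      rw [ht]
      rw [mul_assoc, Complex.mul_conj]
      push_cast; ring
    have hx3 : t * (starRingEnd ℂ) t = ↑(s^2 * Complex.normSq β) := by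
      rw [ht, Complex.mul_conj]
      rw [Complex.normSq_mul, Complex.normSq_neg]
      push_cast
      rw [Complex.normSq_ofReal]
      push_cast; ring
    rw [hx1, hx2, hx3] at h0
    have hre := (Complex.le_def.mp h0).1
    simp only [Complex.zero_re, Complex.add_re, Complex.ofReal_re, Complex.re_ofReal_mul] at hre
    have hNβ : 0 < Complex.normSq β := Complex.normSq_pos.mpr hβne
    have hseq : s * (1 + |cc.re|) = 1 := by
      rw [hs]; field_simp
    have habs : cc.re ≤ |cc.re| := le_abs_self _
    have habs0 : 0 ≤ |cc.re| := abs_nonneg _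
    nlinarith [mul_pos hs0 hNβ, mul_pos (mul_pos hs0 hs0) hNβ]
  have hbf := key f hf hfb hfz
  have hbg := key g hg hgb hgz
  -- the auxiliary holomorphic functions
  set b : ℂ → ℂ := fun ξ => ∑ i, v i * (starRingEnd ℂ) (w i) *
      ((1:ℂ) - (starRingEnd ℂ) (z i) * ξ)⁻¹ with hb
  set B : ℂ → ℂ := fun ζ => ∑ i, (starRingEnd ℂ) (v i) * w i *
      ((1:ℂ) - z i * (starRingEnd ℂ) ζ)⁻¹ with hB
  have hconjB : ∀ ζ : ℂ, (starRingEnd ℂ) (B ζ) = b ζ := by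
    intro ζ
    rw [hB, hb]
    dsimp only
    rw [map_sum]
    refine Finset.sum_congr rfl fun i _ => ?_
    simp only [map_mul, map_inv₀, map_sub, map_one, Complex.conj_conj]
  have hprod : ∀ ζ ∈ ball (0:ℂ) 1, (g ζ - f ζ) * b ζ = 0 := by
    intro ζ hζ
    have h1 : ((starRingEnd ℂ) (g ζ) - (starRingEnd ℂ) (f ζ)) * B ζ = 0 := by
      have h2 : ((starRingEnd ℂ) (g ζ) - (starRingEnd ℂ) (f ζ)) * B ζ
          = (∑ i, (starRingEnd ℂ) (v i) *
              ((1 - w i * (starRingEnd ℂ) (f ζ)) / (1 - z i * (starRingEnd ℂ) ζ)))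
            - ∑ i, (starRingEnd ℂ) (v i) *
              ((1 - w i * (starRingEnd ℂ) (g ζ)) / (1 - z i * (starRingEnd ℂ) ζ)) := by
        rw [hB]
        dsimp only
        rw [Finset.mul_sum, ← Finset.sum_sub_distrib]
        refine Finset.sum_congr rfl fun i _ => ?_
        rw [div_eq_mul_inv, div_eq_mul_inv]
        ring
      rw [h2, hbf ζ hζ, hbg ζ hζ, sub_zero]
    have h3 := congrArg (starRingEnd ℂ) h1
    simp only [map_mul, map_sub, Complex.conj_conj, map_zero, hconjB] at h3
    exact h3
  have hden : ∀ (i : Fin n), ∀ ξ ∈ ball (0:ℂ) 1, ((1:ℂ) - (starRingEnd ℂ) (z i) * ξ) ≠ 0 := by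
    intro i ξ hξ
    intro h0
    have h1 : (starRingEnd ℂ) (z i) * ξ = 1 := by linear_combination -h0
    have h2 := congrArg norm h1
    rw [norm_mul, norm_one, Complex.norm_conj] at h2
    rw [mem_ball_zero_iff] at hξ
    nlinarith [norm_nonneg (z i), norm_nonneg ξ, hz i]
  by_cases hbz : ∀ ζ ∈ ball (0:ℂ) 1, b ζ = 0
  · -- degenerate case: b vanishes identically, forcing v = 0, contradiction
    exfalso
    have hBz : ∀ ζ ∈ ball (0:ℂ) 1, B ζ = 0 := by
      intro ζ hζ
      have h3 := hconjB ζ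
      rw [hbz ζ hζ] at h3
      have h4 := congrArg (starRingEnd ℂ) h3
      simp only [map_zero, Complex.conj_conj] at h4
      exact h4
    set a : ℂ → ℂ := fun ξ => ∑ i, v i * ((1:ℂ) - (starRingEnd ℂ) (z i) * ξ)⁻¹ with ha
    have haz : ∀ ζ ∈ ball (0:ℂ) 1, a ζ = 0 := by
      intro ζ hζ
      have h5 : (∑ i, (starRingEnd ℂ) (v i) * ((1:ℂ) - z i * (starRingEnd ℂ) ζ)⁻¹)
          = (∑ i, (starRingEnd ℂ) (v i) *
              ((1 - w i * (starRingEnd ℂ) (f ζ)) / (1 - z i * (starRingEnd ℂ) ζ)))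
            + (starRingEnd ℂ) (f ζ) * B ζ := by
        rw [hB]
        dsimp only
        rw [Finset.mul_sum, ← Finset.sum_add_distrib]
        refine Finset.sum_congr rfl fun i _ => ?_
        rw [div_eq_mul_inv]
        ring
      rw [hbf ζ hζ, hBz ζ hζ, mul_zero, zero_add] at h5
      have h6 := congrArg (starRingEnd ℂ) h5
      rw [map_sum, map_zero] at h6
      rw [ha]
      dsimp only
      rw [← h6]
      refine Finset.sum_congr rfl fun i _ => ?_
      simp only [map_mul, map_inv₀, map_sub, map_one, Complex.conj_conj]
    -- clear denominators: an entire function vanishing on the ball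
    set Pf : ℂ → ℂ := fun ξ => ∑ i, v i *
        ∏ j ∈ Finset.univ.erase i, ((1:ℂ) - (starRingEnd ℂ) (z j) * ξ) with hPf
    have hPfball : ∀ ξ ∈ ball (0:ℂ) 1, Pf ξ = 0 := by
      intro ξ hξ
      have h7 : Pf ξ = a ξ * ∏ j, ((1:ℂ) - (starRingEnd ℂ) (z j) * ξ) := by
        rw [hPf, ha]
        dsimp only
        rw [Finset.sum_mul]
        refine Finset.sum_congr rfl fun i _ => ?_
        rw [← Finset.mul_prod_erase _ _ (Finset.mem_univ i), mul_assoc,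
          ← mul_assoc (((1:ℂ) - (starRingEnd ℂ) (z i) * ξ))⁻¹,
          inv_mul_cancel₀ (hden i ξ hξ), one_mul]
      rw [h7, haz ξ hξ, zero_mul]
    have hPfd : Differentiable ℂ Pf := by
      rw [hPf]
      apply Differentiable.fun_sum
      intro i _
      apply Differentiable.const_mul
      apply Differentiable.fun_finsetProd
      intro j _
      exact (differentiable_const _).sub (differentiable_id.const_mul _)
    have hPfzero : ∀ ξ : ℂ, Pf ξ = 0 := by
      have hEq : Set.EqOn Pf 0 Set.univ := by
        apply AnalyticOnNhd.eqOn_of_preconnected_of_eventuallyEq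
          (𝕜 := ℂ) (f := Pf) (g := 0)
          (hPfd.differentiableOn.analyticOnNhd isOpen_univ)
          (analyticOnNhd_const)
          isPreconnected_univ (Set.mem_univ (0:ℂ))
        filter_upwards [isOpen_ball.mem_nhds (mem_ball_self one_pos)] with ξ hξ
        exact hPfball ξ hξ
      intro ξ
      exact hEq (Set.mem_univ ξ)
    have hvz : ∀ i, z i ≠ 0 → v i = 0 := by
      intro i hzi
      have hni : (starRingEnd ℂ) (z i) ≠ 0 := by
        simpa using hzi
      have h1 := hPfzero ((starRingEnd ℂ) (z i))⁻¹
      rw [hPf] at h1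
      dsimp only at h1
      rw [Finset.sum_eq_single i (fun k _ hk => ?_) (fun hmem => absurd (Finset.mem_univ i) hmem)] at h1
      · have hprodne : (∏ j ∈ Finset.univ.erase i,
            ((1:ℂ) - (starRingEnd ℂ) (z j) * ((starRingEnd ℂ) (z i))⁻¹)) ≠ 0 := by
          rw [Finset.prod_ne_zero_iff]
          intro j hj
          intro h0
          have h2 : (starRingEnd ℂ) (z j) * ((starRingEnd ℂ) (z i))⁻¹ = 1 := by
            linear_combination -h0
          rw [mul_inv_eq_one₀ hni] at h2
          have h3 : z j = z i := star_injective h2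
          exact (Finset.mem_erase.mp hj).1 (hinj h3)
        exact (mul_eq_zero.mp h1).resolve_right hprodne
      · refine mul_eq_zero_of_right _ ?_
        refine Finset.prod_eq_zero (Finset.mem_erase.mpr ⟨Ne.symm hk, Finset.mem_univ i⟩) ?_
        rw [mul_inv_cancel₀ hni, sub_self]
    have hvall : ∀ i, v i = 0 := by
      intro i
      by_cases hzi : z i = 0
      · have h1 := haz 0 (mem_ball_self one_pos)
        rw [ha] at h1
        dsimp only at h1
        simp only [mul_zero, sub_zero, inv_one, mul_one] at h1
        rw [Finset.sum_eq_single i (fun k _ hk => ?_)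
          (fun hmem => absurd (Finset.mem_univ i) hmem)] at h1
        · exact h1
        · apply hvz
          intro h0
          exact hk (hinj (h0.trans hzi.symm))
      · exact hvz i hzi
    exact hv (funext hvall)
  · -- main case: b is not identically zero, so f = g by the identity theorem
    push_neg at hbz
    obtain ⟨ζ₀, hζ₀, hbζ₀⟩ := hbz
    have hbd : ContinuousAt b ζ₀ := by
      have : DifferentiableAt ℂ b ζ₀ := by
        rw [hb]
        apply DifferentiableAt.fun_sum
        intro i _
        apply DifferentiableAt.const_mul
        apply DifferentiableAt.inv
        · exact (differentiableAt_const _).sub (differentiableAt_id.const_mul _)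
        · exact hden i ζ₀ hζ₀
      exact this.continuousAt
    have hev : f =ᶠ[nhds ζ₀] g := by
      have h1 : ∀ᶠ ξ in nhds ζ₀, b ξ ≠ 0 := hbd.eventually_ne hbζ₀
      have h2 : ∀ᶠ ξ in nhds ζ₀, ξ ∈ ball (0:ℂ) 1 := isOpen_ball.eventually_mem hζ₀
      filter_upwards [h1, h2] with ξ h1ξ h2ξ
      have := hprod ξ h2ξ
      have h3 := (mul_eq_zero.mp this).resolve_right h1ξ
      have := sub_eq_zero.mp h3
      exact this.symm
    exact (hf.analyticOnNhd isOpen_ball).eqOn_of_preconnected_of_eventuallyEq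
      (hg.analyticOnNhd isOpen_ball) (convex_ball (0:ℂ) 1).isPreconnected hζ₀ hev
end
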